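/- arXiv:2112.08212 — 11 statements merged into one kernel-verified Lean document; each statement's English description precedes it below -/
import Mathlib

section
/- If D is a positive basis of ℝ^n, then the number s of vectors in D satisfies n+1 ≤ s ≤ 2n. -/
noncomputable section

open Matrix
open scoped InnerProductSpace

/-- `ℝ^n` as a Euclidean space. -/
abbrev Euc (n : ℕ) := EuclideanSpace ℝ (Fin n)

/-- The positive span of a set of vectors: all nonnegative linear combinations. -/
def pspan {n : ℕ} (S : Set (Euc n)) : Set (Euc n) :=
  {v | ∃ (t : Finset (Euc n)) (c : Euc n → ℝ),
      ↑t ⊆ S ∧ (∀ d ∈ t, 0 ≤ c d) ∧ v = ∑ d ∈ t, c d • d}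

/-- A finite set is positively independent if no element lies in the positive span
of the others. -/
def PosIndep {n : ℕ} (S : Finset (Euc n)) : Prop :=
  ∀ d ∈ S, d ∉ pspan ((↑S : Set (Euc n)) \ {d})

/-- A positive basis of `ℝ^n`: a positively independent finite set of nonzero vectors
whose positive span is `ℝ^n`. -/
def IsPosBasis {n : ℕ} (S : Finset (Euc n)) : Prop :=
  (∀ d ∈ S, d ≠ 0) ∧ PosIndep S ∧ pspan (↑S : Set (Euc n)) = Set.univ

/-- A positive basis of unit vectors of `ℝ^n`. -/
def IsUnitPosBasis {n : ℕ} (S : Finset (Euc n)) : Prop :=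
  (∀ d ∈ S, ‖d‖ = 1) ∧ PosIndep S ∧ pspan (↑S : Set (Euc n)) = Set.univ

/-- The cosine measure of a finite set of nonzero vectors. -/
def cm {n : ℕ} (S : Finset (Euc n)) : ℝ :=
  sInf {r : ℝ | ∃ u : Euc n, ‖u‖ = 1 ∧
    r = sSup ((fun d => ⟪u, d⟫_ℝ / ‖d‖) '' (↑S : Set (Euc n)))}

/-- The cosine vector set: unit vectors attaining the minimum defining `cm`. -/
def cV {n : ℕ} (S : Finset (Euc n)) : Set (Euc n) :=
  {u | ‖u‖ = 1 ∧ sSup ((fun d => ⟪u, d⟫_ℝ / ‖d‖) '' (↑S : Set (Euc n))) = cm S}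

/-- The active set of vectors of `S` on `u`. -/
def activeSet {n : ℕ} (u : Euc n) (S : Finset (Euc n)) : Set (Euc n) :=
  {d | d ∈ S ∧ ⟪d, u⟫_ℝ = cm S}

/-- The all activity set. -/
def allActivity {n : ℕ} (S : Finset (Euc n)) : Set (Euc n) :=
  ⋃ u ∈ cV S, activeSet u S

/-- A minimal positive basis of a subspace `L` of `ℝ^n`: a positively independent set of
`dim L + 1` unit vectors of `L` whose positive span is `L`. -/
def IsMinPosBasisOf {n : ℕ} (L : Submodule ℝ (Euc n)) (S : Finset (Euc n)) : Prop :=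
  (∀ d ∈ S, ‖d‖ = 1) ∧ (↑S : Set (Euc n)) ⊆ (L : Set (Euc n)) ∧ PosIndep S ∧
    pspan (↑S : Set (Euc n)) = (L : Set (Euc n)) ∧ S.card = Module.finrank ℝ L + 1

/-- `D` is partitioned into `s - n` minimal positive bases `P i` of subspaces `L i`
whose (internal) direct sum is `ℝ^n`. -/
def IsOmegaPartition {n s : ℕ} (D : Finset (Euc n))
    (L : Fin (s - n) → Submodule ℝ (Euc n)) (P : Fin (s - n) → Finset (Euc n)) : Prop :=
  (∀ i, 1 ≤ Module.finrank ℝ (L i)) ∧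
  (∀ i, IsMinPosBasisOf (L i) (P i)) ∧
  (∀ i j, i ≠ j → Disjoint (↑(P i) : Set (Euc n)) (↑(P j) : Set (Euc n))) ∧
  ((↑D : Set (Euc n)) = ⋃ i, (↑(P i) : Set (Euc n))) ∧
  DirectSum.IsInternal L

/-- Membership in the set `Ω` of positive bases of size `s`. -/
def MemOmega {n : ℕ} (s : ℕ) (D : Finset (Euc n)) : Prop :=
  ∃ (L : Fin (s - n) → Submodule ℝ (Euc n)) (P : Fin (s - n) → Finset (Euc n)),
    IsOmegaPartition D L P

/-- Membership in the set `Ω⁺`: an `Ω`-partition with pairwise orthogonal subspaces. -/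
def MemOmegaPlus {n : ℕ} (s : ℕ) (D : Finset (Euc n)) : Prop :=
  ∃ (L : Fin (s - n) → Submodule ℝ (Euc n)) (P : Fin (s - n) → Finset (Euc n)),
    IsOmegaPartition D L P ∧ ∀ i j, i ≠ j → ∀ x ∈ L i, ∀ y ∈ L j, ⟪x, y⟫_ℝ = 0

/-- Reinterpret a plain vector as an element of Euclidean space. -/
def toEuc {n : ℕ} (v : Fin n → ℝ) : Euc n := WithLp.toLp 2 v

/-- The `j`-th column of a matrix, as a vector of `ℝ^n`. -/
def col {n m : ℕ} (B : Matrix (Fin n) (Fin m) ℝ) (j : Fin m) : Euc n := toEuc fun i => B i j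

/-- The Gram matrix `G(B) = Bᵀ B` of the columns of `B`. -/
def gram {n : ℕ} {ι : Type} [Fintype ι] (B : Matrix (Fin n) ι ℝ) : Matrix ι ι ℝ := Bᵀ * B

/-- The grand sum `1ᵀ G 1` of a square matrix. -/
def grandSum {ι : Type} [Fintype ι] (G : Matrix ι ι ℝ) : ℝ :=
  (fun _ => (1 : ℝ)) ⬝ᵥ (G *ᵥ fun _ => (1 : ℝ))

namespace Aux
open scoped Classical
variable {n : ℕ}

lemma pspan_mono {S T : Set (Euc n)} (h : S ⊆ T) : pspan S ⊆ pspan T := by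
  rintro v ⟨t, c, hts, hc, hv⟩
  exact ⟨t, c, hts.trans h, hc, hv⟩

lemma mem_pspan_self {S : Set (Euc n)} {d : Euc n} (h : d ∈ S) : d ∈ pspan S := by
  refine ⟨{d}, fun _ => 1, by simpa using h, by simp, by simp⟩

lemma zero_mem_pspan (S : Set (Euc n)) : (0 : Euc n) ∈ pspan S :=
  ⟨∅, fun _ => 0, by simp, by simp, by simp⟩

lemma pspan_add {S : Set (Euc n)} {x y : Euc n} (hx : x ∈ pspan S) (hy : y ∈ pspan S) :
    x + y ∈ pspan S := by
  obtain ⟨t₁, c₁, ht₁, hc₁, hx⟩ := hx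
  obtain ⟨t₂, c₂, ht₂, hc₂, hy⟩ := hy
  classical
  refine ⟨t₁ ∪ t₂, fun d => (if d ∈ t₁ then c₁ d else 0) + (if d ∈ t₂ then c₂ d else 0),
    ?_, ?_, ?_⟩
  · rw [Finset.coe_union]; exact Set.union_subset ht₁ ht₂
  · intro d _
    have h1 : (0:ℝ) ≤ if d ∈ t₁ then c₁ d else 0 := by
      by_cases h : d ∈ t₁ <;> simp [h] <;> exact hc₁ _ h
    have h2 : (0:ℝ) ≤ if d ∈ t₂ then c₂ d else 0 := by
      by_cases h : d ∈ t₂ <;> simp [h] <;> exact hc₂ _ h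
    exact add_nonneg h1 h2
  · have e1 : ∑ d ∈ t₁ ∪ t₂, (if d ∈ t₁ then c₁ d else 0) • d = ∑ d ∈ t₁, c₁ d • d := by
      rw [← Finset.sum_subset Finset.subset_union_left]
      · exact Finset.sum_congr rfl fun d hd => by rw [if_pos hd]
      · intro d _ hd; rw [if_neg hd, zero_smul]
    have e2 : ∑ d ∈ t₁ ∪ t₂, (if d ∈ t₂ then c₂ d else 0) • d = ∑ d ∈ t₂, c₂ d • d := by
      rw [← Finset.sum_subset Finset.subset_union_right]
      · exact Finset.sum_congr rfl fun d hd => by rw [if_pos hd]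
      · intro d _ hd; rw [if_neg hd, zero_smul]
    simp only [add_smul, Finset.sum_add_distrib, e1, e2, hx, hy]

lemma mem_pspan_finset {F : Finset (Euc n)} {v : Euc n} :
    v ∈ pspan (↑F : Set (Euc n)) ↔
      ∃ c : Euc n → ℝ, (∀ d ∈ F, 0 ≤ c d) ∧ v = ∑ d ∈ F, c d • d := by
  classical
  constructor
  · rintro ⟨t, c, hts, hc, hv⟩
    have htF : t ⊆ F := by exact_mod_cast hts
    refine ⟨fun d => if d ∈ t then c d else 0, ?_, ?_⟩
    · intro d _
      by_cases h : d ∈ t <;> simp [h] <;> exact hc _ h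
    · rw [hv, ← Finset.sum_subset htF]
      · exact Finset.sum_congr rfl fun d hd => by simp [hd]
      · intro d _ hd; simp [hd]
  · rintro ⟨c, hc, hv⟩
    exact ⟨F, c, Set.Subset.refl _, hc, hv⟩

lemma pspan_subset_submodule {S : Set (Euc n)} {V : Submodule ℝ (Euc n)}
    (h : S ⊆ (V : Set (Euc n))) : pspan S ⊆ (V : Set (Euc n)) := by
  rintro v ⟨t, c, hts, _, rfl⟩
  exact V.sum_mem fun d hd => V.smul_mem _ (h (hts hd))

lemma pspan_subset_span (S : Set (Euc n)) :
    pspan S ⊆ (Submodule.span ℝ S : Set (Euc n)) := by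
  rintro v ⟨t, c, hts, _, rfl⟩
  exact Submodule.sum_mem _ fun d hd =>
    Submodule.smul_mem _ _ (Submodule.subset_span (hts hd))

lemma span_subset_pspan {Z : Finset (Euc n)} {l : Euc n → ℝ}
    (hl : ∀ z ∈ Z, 0 < l z) (hsum : ∑ z ∈ Z, l z • z = 0) :
    (Submodule.span ℝ (↑Z : Set (Euc n)) : Set (Euc n)) ⊆ pspan (↑Z : Set (Euc n)) := by
  intro v hv
  rw [SetLike.mem_coe, Submodule.mem_span_finset] at hv
  obtain ⟨μ, -, hμ⟩ := hv
  set t : ℝ := ∑ z ∈ Z, |μ z| / l z with ht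
  have htz : ∀ z ∈ Z, |μ z| / l z ≤ t := by
    intro z hz
    exact Finset.single_le_sum (f := fun z => |μ z| / l z)
      (fun w hw => div_nonneg (abs_nonneg _) (hl w hw).le) hz
  rw [mem_pspan_finset]
  refine ⟨fun z => μ z + t * l z, ?_, ?_⟩
  · intro z hz
    have h1 : |μ z| ≤ t * l z := (div_le_iff₀ (hl z hz)).mp (htz z hz)
    have h2 : -|μ z| ≤ μ z := neg_abs_le _
    dsimp only
    linarith
  · have : ∑ z ∈ Z, (μ z + t * l z) • z
        = (∑ z ∈ Z, μ z • z) + t • (∑ z ∈ Z, l z • z) := by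
      rw [Finset.smul_sum]
      rw [← Finset.sum_add_distrib]
      exact Finset.sum_congr rfl fun z hz => by
        rw [add_smul, smul_smul]
    rw [this, hsum, smul_zero, add_zero, hμ]

lemma exists_posdep {D : Finset (Euc n)} {V : Submodule ℝ (Euc n)}
    (hsub : ↑D ⊆ (V : Set (Euc n))) (hspan : pspan ↑D = (V : Set (Euc n))) :
    ∃ l : Euc n → ℝ, (∀ d ∈ D, 0 < l d) ∧ ∑ d ∈ D, l d • d = 0 := by
  have hmem : (-∑ d ∈ D, d) ∈ pspan (↑D : Set (Euc n)) := by
    rw [hspan, SetLike.mem_coe]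
    exact V.neg_mem (V.sum_mem fun d hd => hsub hd)
  rw [mem_pspan_finset] at hmem
  obtain ⟨c, hc, hc2⟩ := hmem
  refine ⟨fun d => 1 + c d, fun d hd => by have := hc d hd; dsimp only; linarith, ?_⟩
  have e : ∑ d ∈ D, (1 + c d) • d = (∑ d ∈ D, d) + ∑ d ∈ D, c d • d := by
    rw [← Finset.sum_add_distrib]
    exact Finset.sum_congr rfl fun d _ => by rw [add_smul, one_smul]
  rw [e, ← hc2, add_neg_cancel]

lemma erase_linearIndependent_of_min {D : Finset (Euc n)} {d₀ : Euc n} (hd₀ : d₀ ∈ D)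
    (l : Euc n → ℝ) (hl : ∀ d ∈ D, 0 < l d) (hsum : ∑ d ∈ D, l d • d = 0)
    (hmin : ∀ Z : Finset (Euc n), Z ⊆ D → Z.Nonempty →
      (∃ m : Euc n → ℝ, (∀ z ∈ Z, 0 < m z) ∧ ∑ z ∈ Z, m z • z = 0) → D.card ≤ Z.card) :
    LinearIndependent ℝ ((↑) : ↥(D.erase d₀) → Euc n) := by
  classical
  set E := D.erase d₀ with hE
  by_contra hdep
  rw [Fintype.not_linearIndependent_iff] at hdep
  obtain ⟨g, hg0, i₀, hi₀⟩ := hdep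
  set μ0 : Euc n → ℝ := fun x => if h : x ∈ E then g ⟨x, h⟩ else 0 with hμ0
  have hμ0sum : ∑ z ∈ E, μ0 z • z = 0 := by
    rw [← hg0, Finset.univ_eq_attach, ← Finset.sum_attach E (fun z => μ0 z • z)]
    exact Finset.sum_congr rfl fun i _ => by simp [hμ0, i.2]
  have hμ0i₀ : μ0 ↑i₀ ≠ 0 := by simpa [hμ0, i₀.2] using hi₀
  -- choose a sign so that some entry is negative
  obtain ⟨μ, hμsum, hμout, hμneg⟩ :
      ∃ μ : Euc n → ℝ, (∑ z ∈ E, μ z • z = 0) ∧ (∀ z, z ∉ E → μ z = 0) ∧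
        (∃ z ∈ E, μ z < 0) := by
    rcases lt_or_gt_of_ne hμ0i₀ with h | h
    · exact ⟨μ0, hμ0sum, fun z hz => by simp [hμ0, hz], ⟨↑i₀, i₀.2, h⟩⟩
    · refine ⟨fun z => -μ0 z, ?_, fun z hz => by simp [hμ0, hz],
        ⟨↑i₀, i₀.2, by dsimp only; linarith⟩⟩
      have : ∑ z ∈ E, (fun z => -μ0 z) z • z = -∑ z ∈ E, μ0 z • z := by
        rw [← Finset.sum_neg_distrib]
        exact Finset.sum_congr rfl fun z _ => by dsimp only; rw [neg_smul]
      rw [this, hμ0sum, neg_zero]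
  set S := E.filter (fun z => μ z < 0) with hS
  have hSne : S.Nonempty := by
    obtain ⟨z, hz, hzneg⟩ := hμneg
    exact ⟨z, Finset.mem_filter.2 ⟨hz, hzneg⟩⟩
  obtain ⟨z₁, hz₁S, hz₁min⟩ := Finset.exists_min_image S (fun z => l z / (-μ z)) hSne
  have hz₁E : z₁ ∈ E := (Finset.mem_filter.1 hz₁S).1
  have hz₁D : z₁ ∈ D := Finset.mem_of_mem_erase hz₁E
  have hz₁neg : μ z₁ < 0 := (Finset.mem_filter.1 hz₁S).2
  set t : ℝ := l z₁ / (-μ z₁) with htdef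
  have ht0 : 0 < t := div_pos (hl z₁ hz₁D) (by linarith)
  set ν : Euc n → ℝ := fun z => l z + t * μ z with hν
  have hνsum : ∑ z ∈ D, ν z • z = 0 := by
    have hED : E ⊆ D := Finset.erase_subset _ _
    have hμD : ∑ z ∈ D, μ z • z = 0 := by
      rw [← Finset.sum_subset hED (fun z hz hzE => by rw [hμout z hzE, zero_smul])]
      exact hμsum
    have : ∑ z ∈ D, ν z • z = (∑ z ∈ D, l z • z) + t • ∑ z ∈ D, μ z • z := by
      rw [Finset.smul_sum, ← Finset.sum_add_distrib]
      exact Finset.sum_congr rfl fun z _ => by rw [hν]; simp [add_smul, smul_smul]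
    rw [this, hsum, hμD, smul_zero, add_zero]
  have hν0 : ∀ z ∈ D, 0 ≤ ν z := by
    intro z hz
    rcases lt_or_ge (μ z) 0 with hneg | hpos
    · have hzE : z ∈ E := by
        by_contra hzE; rw [hμout z hzE] at hneg; linarith
      have hzS : z ∈ S := Finset.mem_filter.2 ⟨hzE, hneg⟩
      have := hz₁min z hzS
      have h2 : t * (-μ z) ≤ l z := by
        rw [← le_div_iff₀ (by linarith : (0:ℝ) < -μ z)]
        exact this
      simp only [hν]; nlinarith
    · have : 0 ≤ t * μ z := mul_nonneg ht0.le hpos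
      have := hl z hz
      simp only [hν]; linarith
  have hνz₁ : ν z₁ = 0 := by
    have hne : -μ z₁ ≠ 0 := by linarith
    have hne' : μ z₁ ≠ 0 := by linarith
    simp only [hν, htdef]
    field_simp
    ring
  have hνd₀ : 0 < ν d₀ := by
    have : μ d₀ = 0 := hμout d₀ (Finset.notMem_erase _ _)
    simp only [hν, this, mul_zero, add_zero]
    exact hl d₀ hd₀
  set Z' := D.filter (fun z => 0 < ν z) with hZ'
  have hZ'sub : Z' ⊆ D := Finset.filter_subset _ _
  have hZ'ne : Z'.Nonempty := ⟨d₀, Finset.mem_filter.2 ⟨hd₀, hνd₀⟩⟩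
  have hZ'dep : ∃ m : Euc n → ℝ, (∀ z ∈ Z', 0 < m z) ∧ ∑ z ∈ Z', m z • z = 0 := by
    refine ⟨ν, fun z hz => (Finset.mem_filter.1 hz).2, ?_⟩
    rw [Finset.sum_subset hZ'sub]
    · exact hνsum
    · intro z hz hzZ'
      have : ν z = 0 := by
        have h1 := hν0 z hz
        by_contra h2
        exact hzZ' (Finset.mem_filter.2 ⟨hz, lt_of_le_of_ne h1 (Ne.symm h2)⟩)
      rw [this, zero_smul]
  have hcard := hmin Z' hZ'sub hZ'ne hZ'dep
  have hss : Z' ⊂ D := by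
    refine Finset.ssubset_iff_of_subset hZ'sub |>.2 ⟨z₁, hz₁D, ?_⟩
    intro hz₁Z'
    have := (Finset.mem_filter.1 hz₁Z').2
    rw [hνz₁] at this; exact lt_irrefl _ this
  exact absurd hcard (not_le.2 (Finset.card_lt_card hss))
lemma posIndep_subset {Z D : Finset (Euc n)} (h : Z ⊆ D) (hD : PosIndep D) : PosIndep Z :=
  fun d hd hmem => hD d (h hd)
    (pspan_mono (Set.diff_subset_diff_left (Finset.coe_subset.2 h)) hmem)

open Module in
theorem card_le_aux (k : ℕ) : ∀ (D : Finset (Euc n)) (V : Submodule ℝ (Euc n)),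
      D.card ≤ k → (∀ d ∈ D, d ≠ 0) → PosIndep D → ↑D ⊆ (V : Set (Euc n)) →
      pspan ↑D = (V : Set (Euc n)) → D.card ≤ 2 * finrank ℝ V := by
  induction k with
  | zero => intro D V hk _ _ _ _; omega
  | succ k IH =>
    intro D V hk hnz hpi hsub hspan
    rcases D.eq_empty_or_nonempty with rfl | hDne
    · simp
    obtain ⟨l₀, hl₀, hl₀sum⟩ := exists_posdep hsub hspan
    set P : Finset (Euc n) → Prop := fun Z =>
      Z.Nonempty ∧ ∃ m : Euc n → ℝ, (∀ z ∈ Z, 0 < m z) ∧ ∑ z ∈ Z, m z • z = 0 with hP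
    have hPD : P D := ⟨hDne, l₀, hl₀, hl₀sum⟩
    set 𝒵 := D.powerset.filter P with h𝒵
    have hD𝒵 : D ∈ 𝒵 := Finset.mem_filter.2 ⟨Finset.mem_powerset.2 (Finset.Subset.refl D), hPD⟩
    obtain ⟨Z, hZ𝒵, hZmin⟩ := Finset.exists_min_image 𝒵 Finset.card ⟨D, hD𝒵⟩
    have hZD : Z ⊆ D := Finset.mem_powerset.1 (Finset.mem_filter.1 hZ𝒵).1
    obtain ⟨hZne, m, hm, hmsum⟩ := (Finset.mem_filter.1 hZ𝒵).2
    set L := Submodule.span ℝ (↑Z : Set (Euc n)) with hL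
    have hpspanZ : pspan (↑Z : Set (Euc n)) = (L : Set (Euc n)) :=
      subset_antisymm (pspan_subset_span _) (span_subset_pspan hm hmsum)
    have hLV : L ≤ V := Submodule.span_le.2 fun z hz => hsub (Finset.coe_subset.2 hZD hz)
    have hfrL : 1 ≤ finrank ℝ L := by
      obtain ⟨z, hz⟩ := hZne
      have hzL : z ∈ L := Submodule.subset_span (Finset.mem_coe.2 hz)
      have hz0 : z ≠ 0 := hnz z (hZD hz)
      have : Nontrivial L := ⟨⟨⟨z, hzL⟩, 0, by simp [hz0]⟩⟩
      exact Module.finrank_pos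
    have hfrLV : finrank ℝ L ≤ finrank ℝ V := Submodule.finrank_mono hLV
    rcases eq_or_ne Z D with rfl | hZneq
    · -- minimal case: Z = D, so D.erase d₀ is linearly independent
      obtain ⟨d₀, hd₀⟩ := hZne
      have hmin' : ∀ Z' : Finset (Euc n), Z' ⊆ Z → Z'.Nonempty →
          (∃ m' : Euc n → ℝ, (∀ z ∈ Z', 0 < m' z) ∧ ∑ z ∈ Z', m' z • z = 0) →
          Z.card ≤ Z'.card := by
        intro Z' hsub' hne' hdep'
        exact hZmin Z' (Finset.mem_filter.2 ⟨Finset.mem_powerset.2 hsub', hne', hdep'⟩)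
      have hlin := erase_linearIndependent_of_min hd₀ m hm hmsum hmin'
      have h1 : finrank ℝ (Submodule.span ℝ (↑(Z.erase d₀) : Set (Euc n)))
          = (Z.erase d₀).card := finrank_span_finset_eq_card hlin
      have h2 : Submodule.span ℝ (↑(Z.erase d₀) : Set (Euc n)) ≤ V :=
        Submodule.span_le.2 fun z hz =>
          hsub (Finset.coe_subset.2 (Finset.erase_subset _ _) hz)
      have h3 : (Z.erase d₀).card ≤ finrank ℝ V := h1 ▸ Submodule.finrank_mono h2
      have h4 : (Z.erase d₀).card = Z.card - 1 := Finset.card_erase_of_mem hd₀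
      have h5 : 1 ≤ Z.card := Finset.card_pos.2 ⟨d₀, hd₀⟩
      have h6 : 1 ≤ finrank ℝ V := le_trans hfrL hfrLV
      omega
    · -- Z is a proper subset of D
      have hZssub : Z ⊂ D := lt_of_le_of_ne hZD hZneq
      have hZcard : Z.card < D.card := Finset.card_lt_card hZssub
      have hZle : Z.card ≤ 2 * finrank ℝ L :=
        IH Z L (by omega) (fun z hz => hnz z (hZD hz)) (posIndep_subset hZD hpi)
          (fun z hz => Submodule.subset_span hz) hpspanZ
      -- projection onto Lᗮ
      set π : Euc n →ₗ[ℝ] Euc n :=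
        Lᗮ.subtype ∘ₗ (Lᗮ.orthogonalProjectionOnto : Euc n →L[ℝ] Lᗮ).toLinearMap with hπ
      have hπsub : ∀ x : Euc n, x - π x ∈ L := by
        intro x
        have h := Submodule.sub_starProjection_mem_orthogonal (K := Lᗮ) x
        rwa [Submodule.orthogonal_orthogonal] at h
      have hπmem : ∀ x : Euc n, π x ∈ Lᗮ := fun x => (Lᗮ.orthogonalProjectionOnto x).2
      have hπL : ∀ x ∈ L, π x = 0 := by
        intro x hx
        have : Lᗮ.orthogonalProjectionOnto x = 0 :=
          Submodule.orthogonalProjectionOnto_apply_of_mem_orthogonal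
            (Submodule.le_orthogonal_orthogonal L hx)
        simp [hπ, this]
      have hπid : ∀ x ∈ Lᗮ, π x = x := by
        intro x hx
        have : (Lᗮ.orthogonalProjectionOnto x : Euc n) = x := Submodule.starProjection_eq_self_iff.2 hx
        simpa [hπ] using this
      -- key claim
      have claim : ∀ e ∈ D, e ∉ Z → ∀ x ∈ pspan (↑((D \ Z).erase e) : Set (Euc n)),
          e - x ∈ L → False := by
        intro e heD heZ x hx hxL
        have h1 : x ∈ pspan (↑(D.erase e) : Set (Euc n)) :=
          pspan_mono (Finset.coe_subset.2 (Finset.erase_subset_erase _ Finset.sdiff_subset)) hx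
        have h2 : e - x ∈ pspan (↑(D.erase e) : Set (Euc n)) := by
          have hZsub : (↑Z : Set (Euc n)) ⊆ ↑(D.erase e) := by
            intro z hz
            exact Finset.mem_coe.2 (Finset.mem_erase.2
              ⟨fun hez => heZ (hez ▸ hz), hZD (Finset.mem_coe.1 hz)⟩)
          exact pspan_mono hZsub (hpspanZ ▸ (SetLike.mem_coe).2 hxL
            : e - x ∈ pspan (↑Z : Set (Euc n)))
        have h3 : e ∈ pspan (↑(D.erase e) : Set (Euc n)) := by
          have := pspan_add h2 h1
          rwa [sub_add_cancel] at this
        exact hpi e heD (by rwa [Finset.coe_erase] at h3)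
      have hinj : Set.InjOn π (↑(D \ Z) : Set (Euc n)) := by
        intro e he f hf hef
        by_contra hne
        have heD : e ∈ D := (Finset.mem_sdiff.1 (Finset.mem_coe.1 he)).1
        have heZ : e ∉ Z := (Finset.mem_sdiff.1 (Finset.mem_coe.1 he)).2
        have hfmem : f ∈ (D \ Z).erase e :=
          Finset.mem_erase.2 ⟨fun h => hne h.symm, Finset.mem_coe.1 hf⟩
        refine claim e heD heZ f (mem_pspan_self (Finset.mem_coe.2 hfmem)) ?_
        have : e - f = (e - π e) - (f - π f) := by rw [hef]; abel
        rw [this]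
        exact L.sub_mem (hπsub e) (hπsub f)
      set D' := (D \ Z).image π with hD'
      have hcard' : D'.card = (D \ Z).card := Finset.card_image_of_injOn hinj
      set W := V ⊓ Lᗮ with hW
      have hD'W : (↑D' : Set (Euc n)) ⊆ (W : Set (Euc n)) := by
        intro v hv
        obtain ⟨e, he, rfl⟩ := Finset.mem_image.1 (Finset.mem_coe.1 hv)
        have heD : e ∈ D := (Finset.mem_sdiff.1 he).1
        refine Submodule.mem_inf.2 ⟨?_, hπmem e⟩
        have h1 : e ∈ V := hsub (Finset.mem_coe.2 heD)
        have h2 : e - π e ∈ V := hLV (hπsub e)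
        have : π e = e - (e - π e) := by abel
        rw [this]; exact V.sub_mem h1 h2
      have hD'nz : ∀ v ∈ D', v ≠ 0 := by
        intro v hv hv0
        obtain ⟨e, he, rfl⟩ := Finset.mem_image.1 hv
        have heD : e ∈ D := (Finset.mem_sdiff.1 he).1
        have heZ : e ∉ Z := (Finset.mem_sdiff.1 he).2
        refine claim e heD heZ 0 (zero_mem_pspan _) ?_
        rw [sub_zero]
        have := hπsub e
        rwa [hv0, sub_zero] at this
      have hD'pi : PosIndep D' := by
        intro v hv hvmem
        obtain ⟨e, he, rfl⟩ := Finset.mem_image.1 hv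
        have heD : e ∈ D := (Finset.mem_sdiff.1 he).1
        have heZ : e ∉ Z := (Finset.mem_sdiff.1 he).2
        have hsub2 : (↑D' : Set (Euc n)) \ {π e}
            ⊆ ↑(((D \ Z).erase e).image π) := by
          rintro u ⟨hu, hune⟩
          obtain ⟨f, hf, rfl⟩ := Finset.mem_image.1 (Finset.mem_coe.1 hu)
          have hfe : f ≠ e := by
            intro h; exact hune (by rw [h]; rfl)
          exact Finset.mem_coe.2 (Finset.mem_image.2 ⟨f, Finset.mem_erase.2 ⟨hfe, hf⟩, rfl⟩)
        have hvmem' := pspan_mono hsub2 hvmem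
        rw [mem_pspan_finset] at hvmem'
        obtain ⟨c, hc, hceq⟩ := hvmem'
        have hinj' : ∀ x ∈ (D \ Z).erase e, ∀ y ∈ (D \ Z).erase e, π x = π y → x = y := by
          intro x hx y hy hxy
          exact hinj (Finset.mem_coe.2 (Finset.mem_of_mem_erase hx))
            (Finset.mem_coe.2 (Finset.mem_of_mem_erase hy)) hxy
        rw [Finset.sum_image hinj'] at hceq
        set x := ∑ f ∈ (D \ Z).erase e, c (π f) • f with hx
        have hπx : π x = π e := by
          rw [hx, map_sum]
          simp only [_root_.map_smul]
          exact hceq.symm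
        refine claim e heD heZ x ?_ ?_
        · rw [mem_pspan_finset]
          exact ⟨fun z => c (π z), fun f hf =>
            hc _ (Finset.mem_image.2 ⟨f, hf, rfl⟩), rfl⟩
        · have h := hπsub (e - x)
          rwa [map_sub, hπx, sub_self, sub_zero] at h
      have hpspanD' : pspan (↑D' : Set (Euc n)) = (W : Set (Euc n)) := by
        refine subset_antisymm (pspan_subset_submodule hD'W) ?_
        intro w hw
        have hwV : w ∈ V := (Submodule.mem_inf.1 ((SetLike.mem_coe).1 hw)).1
        have hwL : w ∈ Lᗮ := (Submodule.mem_inf.1 ((SetLike.mem_coe).1 hw)).2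
        have hwD : w ∈ pspan (↑D : Set (Euc n)) := hspan ▸ (SetLike.mem_coe).2 hwV
        rw [mem_pspan_finset] at hwD
        obtain ⟨c, hc, hceq⟩ := hwD
        have hsplit : ∑ d ∈ D, c d • π d = ∑ d ∈ D \ Z, c d • π d := by
          rw [← Finset.sum_sdiff hZD]
          have : ∑ d ∈ Z, c d • π d = 0 := by
            refine Finset.sum_eq_zero fun z hz => ?_
            rw [hπL z (Submodule.subset_span (Finset.mem_coe.2 hz)), smul_zero]
          rw [this, add_zero]
        have hweq : w = ∑ d ∈ D \ Z, c d • π d := by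
          have : π w = ∑ d ∈ D, c d • π d := by
            rw [hceq, map_sum]
            exact Finset.sum_congr rfl fun d _ => by rw [_root_.map_smul]
          rw [← hπid w hwL, this, hsplit]
        rw [mem_pspan_finset]
        refine ⟨fun v => c (Function.invFunOn π (↑(D \ Z) : Set (Euc n)) v), ?_, ?_⟩
        · intro v hv
          obtain ⟨f, hf, rfl⟩ := Finset.mem_image.1 hv
          have hmem := Function.invFunOn_mem (f := ⇑π) ⟨f, Finset.mem_coe.2 hf, rfl⟩
          exact hc _ ((Finset.mem_sdiff.1 (Finset.mem_coe.1 hmem)).1)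
        · have hinj' : ∀ x ∈ D \ Z, ∀ y ∈ D \ Z, π x = π y → x = y := fun x hx y hy h =>
            hinj (Finset.mem_coe.2 hx) (Finset.mem_coe.2 hy) h
          rw [hD', Finset.sum_image hinj', hweq]
          refine Finset.sum_congr rfl fun f hf => ?_
          have hfix : Function.invFunOn (⇑π) (↑(D \ Z)) (π f) = f :=
            hinj.leftInvOn_invFunOn (Finset.mem_coe.2 hf)
          dsimp only
          rw [hfix]
      have hD'le : D'.card ≤ 2 * finrank ℝ W := by
        refine IH D' W ?_ hD'nz hD'pi hD'W hpspanD'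
        have h1 : (D \ Z).card + Z.card = D.card := Finset.card_sdiff_add_card_eq_card hZD
        have h2 : 1 ≤ Z.card := Finset.card_pos.2 hZne
        omega
      have hfr : finrank ℝ L + finrank ℝ W = finrank ℝ V := by
        rw [hW, inf_comm]
        exact Submodule.finrank_add_inf_finrank_orthogonal hLV
      have h1 : (D \ Z).card + Z.card = D.card := Finset.card_sdiff_add_card_eq_card hZD
      omega

open Module in
theorem size_of_positive_basis' {n : ℕ} (hn : 1 ≤ n) (D : Finset (Euc n))
    (hnz : ∀ d ∈ D, d ≠ 0) (hpi : PosIndep D)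
    (hspan : pspan (↑D : Set (Euc n)) = Set.univ) :
    n + 1 ≤ D.card ∧ D.card ≤ 2 * n := by
  have hsub : (↑D : Set (Euc n)) ⊆ ((⊤ : Submodule ℝ (Euc n)) : Set (Euc n)) := by
    simp [Set.subset_def]
  have hspan' : pspan (↑D : Set (Euc n)) = ((⊤ : Submodule ℝ (Euc n)) : Set (Euc n)) := by
    rw [hspan, Submodule.top_coe]
  have hfr : finrank ℝ (⊤ : Submodule ℝ (Euc n)) = n := by
    rw [finrank_top, finrank_euclideanSpace_fin]
  constructor
  · -- lower bound
    have hspanD : Submodule.span ℝ (↑D : Set (Euc n)) = ⊤ := by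
      have h1 := pspan_subset_span (↑D : Set (Euc n))
      rw [hspan] at h1
      exact top_unique fun x _ => h1 (Set.mem_univ x)
    have hge : n ≤ D.card := by
      have h2 : finrank ℝ (Submodule.span ℝ (↑D : Set (Euc n))) ≤ D.card :=
        finrank_span_finset_le_card D
      rw [hspanD, finrank_top, finrank_euclideanSpace_fin] at h2
      exact h2
    have hne : D.card ≠ n := by
      intro hcard
      have hDne : D.Nonempty := Finset.card_pos.1 (by omega)
      have hcard' : Fintype.card ↥D = finrank ℝ (Euc n) := by
        rw [Fintype.card_coe, hcard, finrank_euclideanSpace_fin]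
      have hlespan : ⊤ ≤ Submodule.span ℝ (Set.range ((↑) : ↥D → Euc n)) := by
        rw [Subtype.range_coe_subtype]
        rw [show {x | x ∈ D} = (↑D : Set (Euc n)) from rfl, hspanD]
      have hlin := linearIndependent_of_top_le_span_of_card_eq_finrank hlespan hcard'
      obtain ⟨l, hl, hlsum⟩ := exists_posdep hsub hspan'
      rw [Fintype.linearIndependent_iff] at hlin
      obtain ⟨d₀, hd₀⟩ := hDne
      have hsum0 : ∑ i : ↥D, l ↑i • (↑i : Euc n) = 0 := by
        rw [Finset.univ_eq_attach, Finset.sum_attach D (fun z => l z • z)]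
        exact hlsum
      have := hlin (fun i => l ↑i) hsum0 ⟨d₀, hd₀⟩
      exact absurd this (ne_of_gt (hl d₀ hd₀))
    omega
  · have := card_le_aux D.card D ⊤ le_rfl hnz hpi hsub hspan'
    rwa [hfr] at this

end Aux

/-- If `D` is a positive basis of `ℝ^n`, then the number `s` of vectors in `D`
satisfies `n + 1 ≤ s ≤ 2n`. -/
theorem size_of_positive_basis {n : ℕ} (hn : 1 ≤ n) (D : Finset (Euc n))
    (hD : IsPosBasis D) :
    n + 1 ≤ D.card ∧ D.card ≤ 2 * n := by
  exact Aux.size_of_positive_basis' hn D hD.1 hD.2.1 hD.2.2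
end
end

section
/- Let S = {d_1, ..., d_s} be a finite set of vectors that linearly spans ℝ^n. Then S positively spans ℝ^n if and only if there exist real scalars α_1, ..., α_s > 0 such that α_1 d_1 + ... + α_s d_s = 0. -/
noncomputable section

open Matrix
open scoped InnerProductSpace

/-- a set spanning `ℝ^n` positively spans `ℝ^n` iff there is a strictly positive
combination of its elements summing to zero. -/
theorem positively_spans_iff_pos_combination_zero {n : ℕ} (S : Finset (Euc n))
    (hspan : Submodule.span ℝ (↑S : Set (Euc n)) = ⊤) :
    pspan (↑S : Set (Euc n)) = Set.univ ↔
      ∃ α : Euc n → ℝ, (∀ d ∈ S, 0 < α d) ∧ ∑ d ∈ S, α d • d = 0 := by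
  constructor
  · intro hps
    have key : ∀ d : Euc n, ∃ c : Euc n → ℝ, (∀ e ∈ S, 0 ≤ c e) ∧
        (-d : Euc n) = ∑ e ∈ S, c e • e := by
      intro d
      classical
      have hmem : (-d : Euc n) ∈ pspan (↑S : Set (Euc n)) := by
        rw [hps]; trivial
      obtain ⟨t, c, hts, hc, hv⟩ := hmem
      have hts' : t ⊆ S := Finset.coe_subset.mp hts
      refine ⟨fun e => if e ∈ t then c e else 0, ?_, ?_⟩
      · intro e _
        by_cases h : e ∈ t
        · simpa [h] using hc e h
        · simp [h]
      · rw [hv, ← Finset.sum_subset hts']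
        · exact Finset.sum_congr rfl fun e he => by simp [he]
        · intro e _ he; simp [he]
    choose c hc0 hsum using key
    refine ⟨fun e => 1 + ∑ d ∈ S, c d e, ?_, ?_⟩
    · intro e he
      have : 0 ≤ ∑ d ∈ S, c d e := Finset.sum_nonneg fun d _ => hc0 d e he
      show 0 < 1 + ∑ d ∈ S, c d e
      linarith
    · have h1 : ∑ e ∈ S, (1 + ∑ d ∈ S, c d e) • e
          = ∑ e ∈ S, (e + ∑ d ∈ S, c d e • e) := by
        refine Finset.sum_congr rfl fun e _ => ?_
        rw [add_smul, one_smul, Finset.sum_smul]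
      rw [h1, Finset.sum_add_distrib, Finset.sum_comm]
      have h2 : ∀ d ∈ S, ∑ e ∈ S, c d e • e = -d := fun d _ => (hsum d).symm
      rw [Finset.sum_congr rfl h2, Finset.sum_neg_distrib, add_neg_cancel]
  · rintro ⟨α, hα, hsum⟩
    ext v
    simp only [Set.mem_univ, iff_true]
    have hv : v ∈ Submodule.span ℝ (↑S : Set (Euc n)) := hspan ▸ Submodule.mem_top
    obtain ⟨f, -, hf⟩ := Submodule.mem_span_finset.mp hv
    set T : ℝ := ∑ d ∈ S, |f d| / α d with hT
    refine ⟨S, fun d => f d + T * α d, subset_rfl, ?_, ?_⟩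
    · intro d hd
      have hTd : |f d| / α d ≤ T :=
        Finset.single_le_sum (f := fun d => |f d| / α d)
          (fun e he => div_nonneg (abs_nonneg _) (hα e he).le) hd
      have h1 : |f d| ≤ T * α d := by
        rw [div_le_iff₀ (hα d hd)] at hTd; linarith
      have h2 := neg_abs_le (f d)
      show 0 ≤ f d + T * α d
      linarith
    · have h3 : ∑ d ∈ S, (f d + T * α d) • d
          = ∑ d ∈ S, f d • d + T • ∑ d ∈ S, α d • d := by
        rw [Finset.smul_sum, ← Finset.sum_add_distrib]
        refine Finset.sum_congr rfl fun d _ => ?_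
        rw [add_smul, smul_smul]
      rw [h3, hf, hsum, smul_zero, add_zero]
end
end

section
/- If the finite set S = {d_1, ..., d_s} positively spans ℝ^n, then for every index i ∈ {1, ..., s}, the set S \ {d_i} linearly spans ℝ^n. -/
noncomputable section

open Matrix
open scoped InnerProductSpace

/-- if `S` positively spans `ℝ^n`, then removing any single vector still leaves a
set that linearly spans `ℝ^n`. -/
theorem span_of_erase_of_positively_spans {n : ℕ} (S : Finset (Euc n))
    (hS : pspan (↑S : Set (Euc n)) = Set.univ) :
    ∀ d ∈ S, Submodule.span ℝ ((↑S : Set (Euc n)) \ {d}) = ⊤ := by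
  classical
  intro d hd
  have hneg : (-d) ∈ pspan (↑S : Set (Euc n)) := by rw [hS]; trivial
  obtain ⟨t, c, hts, hc, heq⟩ := hneg
  have hd' : d ∈ Submodule.span ℝ ((↑S : Set (Euc n)) \ {d}) := by
    have hr : (∑ e ∈ t.erase d, c e • e) ∈
        Submodule.span ℝ ((↑S : Set (Euc n)) \ {d}) := by
      refine Submodule.sum_mem _ fun e he => Submodule.smul_mem _ _ ?_
      refine Submodule.subset_span ⟨hts (Finset.mem_of_mem_erase he), ?_⟩
      simpa using Finset.ne_of_mem_erase he
    by_cases hmem : d ∈ t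
    · have hsplit : -d = c d • d + ∑ e ∈ t.erase d, c e • e :=
        heq.trans (Finset.add_sum_erase _ _ hmem).symm
      have hpos : (0 : ℝ) < 1 + c d := by linarith [hc d hmem]
      have key : d = (-(1 + c d)⁻¹) • ∑ e ∈ t.erase d, c e • e := by
        have h2 : (1 + c d) • d = -∑ e ∈ t.erase d, c e • e := by
          linear_combination (norm := module) -hsplit
        rw [neg_smul, ← smul_neg, ← h2, smul_smul, inv_mul_cancel₀ hpos.ne',
          one_smul]
      have := Submodule.smul_mem _ (-(1 + c d)⁻¹) hr
      rwa [← key] at this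
    · have : d = (-1 : ℝ) • ∑ e ∈ t.erase d, c e • e := by
        rw [Finset.erase_eq_of_notMem hmem, ← heq]; module
      have h3 := Submodule.smul_mem _ (-1 : ℝ) hr
      rwa [← this] at h3
  rw [eq_top_iff]
  rintro v -
  have hv : v ∈ pspan (↑S : Set (Euc n)) := by rw [hS]; trivial
  obtain ⟨t, c, hts, -, rfl⟩ := hv
  refine Submodule.sum_mem _ fun e he => Submodule.smul_mem _ _ ?_
  by_cases hed : e = d
  · exact hed ▸ hd'
  · exact Submodule.subset_span ⟨hts he, hed⟩
end
end

section
/- Let S = {d_1, ..., d_s} be a finite set of nonzero vectors in ℝ^n. Then S positively spans ℝ^n if and only if for every nonzero vector v ∈ ℝ^n there exists an index i ∈ {1, ..., s} such that vᵀ d_i < 0. -/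
noncomputable section

open Matrix
open scoped InnerProductSpace

lemma mem_pspan_iff {n : ℕ} (S : Finset (Euc n)) (v : Euc n) :
    v ∈ pspan (↑S : Set (Euc n)) ↔
      ∃ c : Euc n → ℝ, (∀ d, 0 ≤ c d) ∧ v = ∑ d ∈ S, c d • d := by
  classical
  constructor
  · rintro ⟨t, c, hts, hc, rfl⟩
    refine ⟨fun d => if d ∈ t then c d else 0, fun d => ?_, ?_⟩
    · dsimp only; split
      · exact hc _ ‹_›
      · exact le_rfl
    · rw [← Finset.sum_subset (Finset.coe_subset.mp hts)
        (fun x _ hx => by simp [hx])]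
      exact Finset.sum_congr rfl fun d hd => by simp [hd]
  · rintro ⟨c, hc, rfl⟩
    exact ⟨S, c, subset_rfl, fun d _ => hc d, rfl⟩

lemma pspan_zero_mem {n : ℕ} (S : Finset (Euc n)) : (0 : Euc n) ∈ pspan (↑S : Set (Euc n)) := by
  rw [mem_pspan_iff]
  exact ⟨0, fun d => le_rfl, by simp⟩

lemma pspan_smul_mem {n : ℕ} (S : Finset (Euc n)) {a : ℝ} (ha : 0 ≤ a) {v : Euc n}
    (hv : v ∈ pspan (↑S : Set (Euc n))) : a • v ∈ pspan (↑S : Set (Euc n)) := by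
  rw [mem_pspan_iff] at hv ⊢
  obtain ⟨c, hc, rfl⟩ := hv
  refine ⟨fun d => a * c d, fun d => mul_nonneg ha (hc d), ?_⟩
  rw [Finset.smul_sum]
  exact Finset.sum_congr rfl fun d _ => (mul_smul a (c d) d).symm

lemma pspan_add_mem {n : ℕ} (S : Finset (Euc n)) {v w : Euc n}
    (hv : v ∈ pspan (↑S : Set (Euc n))) (hw : w ∈ pspan (↑S : Set (Euc n))) :
    v + w ∈ pspan (↑S : Set (Euc n)) := by
  rw [mem_pspan_iff] at hv hw ⊢
  obtain ⟨c, hc, rfl⟩ := hv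
  obtain ⟨c', hc', rfl⟩ := hw
  refine ⟨fun d => c d + c' d, fun d => add_nonneg (hc d) (hc' d), ?_⟩
  rw [← Finset.sum_add_distrib]
  exact Finset.sum_congr rfl fun d _ => (add_smul (c d) (c' d) d).symm

lemma pspan_convex {n : ℕ} (S : Finset (Euc n)) : Convex ℝ (pspan (↑S : Set (Euc n))) :=
  fun _ hx _ hy _ _ ha hb _ =>
    pspan_add_mem S (pspan_smul_mem S ha hx) (pspan_smul_mem S hb hy)

lemma subset_pspan {n : ℕ} (S : Finset (Euc n)) :
    (↑S : Set (Euc n)) ⊆ pspan (↑S : Set (Euc n)) := by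
  classical
  intro d hd
  rw [mem_pspan_iff]
  refine ⟨fun e => if e = d then 1 else 0, fun e => by dsimp only; split <;> norm_num, ?_⟩
  rw [Finset.sum_eq_single d]
  · simp
  · intro b _ hb; simp [hb]
  · intro hdS; exact absurd hd hdS

/-- a finite set of nonzero vectors positively spans `ℝ^n` iff every nonzero
vector has negative dot product with some element of the set. -/
theorem positively_spans_iff_forall_neg_dotprod {n : ℕ} (S : Finset (Euc n))
    (hS : ∀ d ∈ S, d ≠ 0) :
    pspan (↑S : Set (Euc n)) = Set.univ ↔
      ∀ v : Euc n, v ≠ 0 → ∃ d ∈ S, ⟪v, d⟫_ℝ < 0 := by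
  constructor
  · intro hspan v hv
    have hmem : (-v) ∈ pspan (↑S : Set (Euc n)) := hspan ▸ Set.mem_univ _
    rw [mem_pspan_iff] at hmem
    obtain ⟨c, hc, hsum⟩ := hmem
    have h1 : ⟪v, -v⟫_ℝ < 0 := by
      have hn : 0 < ‖v‖ := norm_pos_iff.mpr hv
      rw [inner_neg_right, neg_lt, neg_zero, real_inner_self_eq_norm_sq]
      positivity
    rw [hsum] at h1
    simp only [inner_sum, real_inner_smul_right] at h1
    by_contra hcon
    push_neg at hcon
    refine absurd h1 (not_lt.mpr (Finset.sum_nonneg fun d hd => ?_))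
    exact mul_nonneg (hc d) (hcon d hd)
  · intro h
    -- It suffices to find a small ball inside pspan
    suffices hball : ∃ ε : ℝ, 0 < ε ∧ ∀ x : Euc n, ‖x‖ < ε → x ∈ pspan (↑S : Set (Euc n)) by
      obtain ⟨ε, hεpos, hball⟩ := hball
      ext v
      simp only [Set.mem_univ, iff_true]
      rcases eq_or_ne v 0 with rfl | hv
      · exact pspan_zero_mem S
      · have hnv : (0:ℝ) < ‖v‖ := norm_pos_iff.mpr hv
        set a : ℝ := ε / (2 * ‖v‖) with ha
        have hapos : 0 < a := by positivity
        have : a • v ∈ pspan (↑S : Set (Euc n)) := by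
          apply hball
          rw [norm_smul, Real.norm_eq_abs, abs_of_pos hapos]
          have hval : a * ‖v‖ = ε / 2 := by
            rw [ha]; field_simp
          linarith
        have := pspan_smul_mem S (le_of_lt (inv_pos.mpr hapos)) this
        rwa [smul_smul, inv_mul_cancel₀ hapos.ne', one_smul] at this
    rcases S.eq_empty_or_nonempty with rfl | hSne
    · -- S empty: every vector is zero
      refine ⟨1, one_pos, fun x _ => ?_⟩
      have hx : x = 0 := by
        by_contra hx
        obtain ⟨d, hd, -⟩ := h x hx
        simp at hd
      rw [hx]; exact pspan_zero_mem _
    by_cases hsph : (Metric.sphere (0 : Euc n) 1).Nonempty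
    swap
    · refine ⟨1, one_pos, fun x _ => ?_⟩
      have hx : x = 0 := by
        by_contra hx
        refine hsph ⟨‖x‖⁻¹ • x, ?_⟩
        simp [norm_smul, inv_mul_cancel₀ (norm_ne_zero_iff.mpr hx)]
      rw [hx]; exact pspan_zero_mem _
    -- main case
    set f : Euc n → ℝ := fun w => S.sup' hSne (fun d => ⟪w, d⟫_ℝ) with hf
    have hfc : Continuous f :=
      Continuous.finset_sup'_apply hSne fun d _ => (innerSL ℝ).continuous₂.comp
        (continuous_id.prodMk continuous_const)
    obtain ⟨w₀, hw₀, hmin⟩ :=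
      (isCompact_sphere (0 : Euc n) 1).exists_isMinOn hsph hfc.continuousOn
    have hw₀1 : ‖w₀‖ = 1 := by simpa using hw₀
    set ε : ℝ := f w₀ with hε
    have hεpos : 0 < ε := by
      have hw₀0 : -w₀ ≠ 0 := by
        intro hcon
        rw [neg_eq_zero] at hcon
        rw [hcon, norm_zero] at hw₀1; norm_num at hw₀1
      obtain ⟨d, hd, hvd⟩ := h (-w₀) hw₀0
      rw [inner_neg_left] at hvd
      have : (0:ℝ) < ⟪w₀, d⟫_ℝ := by linarith
      exact this.trans_le (Finset.le_sup' (fun d => ⟪w₀, d⟫_ℝ) hd)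
    refine ⟨ε, hεpos, fun x hx => ?_⟩
    -- x with ‖x‖ < ε lies in convexHull (insert 0 S) ⊆ pspan
    set K : Set (Euc n) := convexHull ℝ (insert (0 : Euc n) (↑S : Set (Euc n))) with hK
    have hKfin : (insert (0 : Euc n) (↑S : Set (Euc n))).Finite :=
      (S.finite_toSet.insert 0)
    have hKcompact : IsCompact K := hKfin.isCompact_convexHull (𝕜 := ℝ)
    have hKconvex : Convex ℝ K := convex_convexHull ℝ _
    have hKsub : K ⊆ pspan (↑S : Set (Euc n)) := by
      apply convexHull_min _ (pspan_convex S)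
      rintro y (rfl | hy)
      · exact pspan_zero_mem S
      · exact subset_pspan S hy
    refine hKsub ?_
    by_contra hxK
    obtain ⟨g, u, hgK, hgx⟩ :=
      geometric_hahn_banach_closed_point hKconvex hKcompact.isClosed hxK
    have hu0 : 0 < u := by
      have := hgK 0 (subset_convexHull ℝ _ (Set.mem_insert 0 _))
      simpa using this
    set v : Euc n := (InnerProductSpace.toDual ℝ (Euc n)).symm g with hv
    have hgv : ∀ y : Euc n, g y = ⟪v, y⟫_ℝ := by
      intro y
      rw [hv, ← InnerProductSpace.toDual_symm_apply]
    have hvne : v ≠ 0 := by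
      intro hcon
      rw [hgv x, hcon, inner_zero_left] at hgx
      exact absurd (hu0.trans hgx) (lt_irrefl 0)
    have hnv : (0:ℝ) < ‖v‖ := norm_pos_iff.mpr hvne
    set w : Euc n := ‖v‖⁻¹ • v with hw
    have hw1 : w ∈ Metric.sphere (0 : Euc n) 1 := by
      simp [hw, norm_smul, inv_mul_cancel₀ hnv.ne']
    have hεw : ε ≤ f w := hmin hw1
    obtain ⟨d, hd, hdw⟩ := Finset.exists_mem_eq_sup' hSne (fun d => ⟪w, d⟫_ℝ)
    have h1 : ε ≤ ⟪w, d⟫_ℝ := by rw [← hdw]; exact hεw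
    have h2 : ⟪v, d⟫_ℝ = ‖v‖ * ⟪w, d⟫_ℝ := by
      rw [hw, real_inner_smul_left]
      field_simp
    have h3 : ⟪v, d⟫_ℝ < u := by
      rw [← hgv d]
      exact hgK d (subset_convexHull ℝ _ (Set.mem_insert_of_mem _ hd))
    have h4 : u < ⟪v, x⟫_ℝ := by rw [← hgv x]; exact hgx
    have h5 : ⟪v, x⟫_ℝ ≤ ‖v‖ * ‖x‖ := real_inner_le_norm v x
    have h6 : ‖v‖ * ε ≤ ⟪v, d⟫_ℝ := by
      rw [h2]
      exact mul_le_mul_of_nonneg_left h1 hnv.le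
    have h7 : ‖v‖ * ‖x‖ < ‖v‖ * ε := mul_lt_mul_of_pos_left hx hnv
    linarith
end
end

section
/- For any positive basis D of unit vectors of ℝ^n with n ≥ 2, the cosine measure of D satisfies 0 < cm(D) < 1. -/
noncomputable section

open Matrix
open scoped InnerProductSpace

/-- A nonempty-positive-span set must be nonempty when it spans everything (n ≥ 1). -/
lemma pspan_nonempty_of_univ {n : ℕ} (hn : 1 ≤ n) (D : Finset (Euc n))
    (hspan : pspan (↑D : Set (Euc n)) = Set.univ) : D.Nonempty := by
  by_contra h
  rw [Finset.not_nonempty_iff_eq_empty] at h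
  subst h
  have hmem : (EuclideanSpace.single (⟨0, by omega⟩ : Fin n) (1 : ℝ)) ∈
      pspan ((↑(∅ : Finset (Euc n))) : Set (Euc n)) := by
    rw [hspan]; exact Set.mem_univ _
  obtain ⟨t, c, ht, -, hv⟩ := hmem
  have ht' : t = ∅ := by
    simpa [Finset.subset_empty, ← Finset.coe_subset] using ht
  subst ht'
  simp only [Finset.sum_empty] at hv
  have := congrArg (fun x : Euc n => x ⟨0, by omega⟩) hv
  simp [EuclideanSpace.single_apply] at this

/-- There are infinitely many unit vectors when `n ≥ 2`, so we can avoid a finite set. -/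
lemma exists_unit_not_mem {n : ℕ} (hn : 2 ≤ n) (D : Finset (Euc n)) :
    ∃ u : Euc n, ‖u‖ = 1 ∧ u ∉ D := by
  set e0 : Euc n := EuclideanSpace.single (⟨0, by omega⟩ : Fin n) (1 : ℝ) with he0
  set e1 : Euc n := EuclideanSpace.single (⟨1, by omega⟩ : Fin n) (1 : ℝ) with he1
  have hinner00 : ⟪e0, e0⟫_ℝ = 1 := by
    simp [he0, EuclideanSpace.inner_single_left, EuclideanSpace.single_apply]
  have hinner11 : ⟪e1, e1⟫_ℝ = 1 := by
    simp [he1, EuclideanSpace.inner_single_left, EuclideanSpace.single_apply]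
  have hinner01 : ⟪e0, e1⟫_ℝ = 0 := by
    simp [he0, he1, EuclideanSpace.inner_single_left, EuclideanSpace.single_apply]
  have hinner10 : ⟪e1, e0⟫_ℝ = 0 := by
    simp [he0, he1, EuclideanSpace.inner_single_left, EuclideanSpace.single_apply]
  set f : ℝ → Euc n := fun t => Real.cos t • e0 + Real.sin t • e1 with hf
  have hnorm : ∀ t, ‖f t‖ = 1 := by
    intro t
    have hsq : ⟪f t, f t⟫_ℝ = 1 := by
      simp only [hf, inner_add_add_self, real_inner_smul_left, real_inner_smul_right,
        hinner00, hinner11, hinner01, hinner10]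
      nlinarith [Real.sin_sq_add_cos_sq t]
    have h2 : ‖f t‖ ^ 2 = 1 := by rw [← real_inner_self_eq_norm_sq]; exact hsq
    nlinarith [norm_nonneg (f t)]
  have hcos : ∀ t, ⟪f t, e0⟫_ℝ = Real.cos t := by
    intro t
    simp only [hf, inner_add_left, real_inner_smul_left, hinner00, hinner10]
    ring
  have hinj : Set.InjOn f (Set.Icc 0 Real.pi) := by
    intro a ha b hb hab
    have : Real.cos a = Real.cos b := by rw [← hcos a, ← hcos b, hab]
    exact Real.injOn_cos ha hb this
  have hinf : (f '' Set.Icc 0 Real.pi).Infinite :=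
    (Set.Icc_infinite Real.pi_pos).image hinj
  obtain ⟨u, hu⟩ := (hinf.diff D.finite_toSet).nonempty
  obtain ⟨⟨t, -, rfl⟩, hu2⟩ := hu
  exact ⟨f t, hnorm t, by simpa using hu2⟩

/-- for a positive basis of unit vectors of `ℝ^n` with `n ≥ 2`,
`0 < cm(D) < 1`. -/
theorem cm_pos_lt_one {n : ℕ} (hn : 2 ≤ n) (D : Finset (Euc n))
    (hD : IsUnitPosBasis D) :
    0 < cm D ∧ cm D < 1 := by
  obtain ⟨hunit, hpi, hspan⟩ := hD
  have hne : D.Nonempty := pspan_nonempty_of_univ (by omega) D hspan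
  set F : Euc n → ℝ := fun u => D.sup' hne (fun d => ⟪u, d⟫_ℝ / ‖d‖) with hF
  have himg : ∀ u : Euc n,
      sSup ((fun d => ⟪u, d⟫_ℝ / ‖d‖) '' (↑D : Set (Euc n))) = F u := by
    intro u
    rw [hF]
    exact (Finset.sup'_eq_csSup_image D hne _).symm
  have hR : {r : ℝ | ∃ u : Euc n, ‖u‖ = 1 ∧
      r = sSup ((fun d => ⟪u, d⟫_ℝ / ‖d‖) '' (↑D : Set (Euc n)))}
      = F '' Metric.sphere (0 : Euc n) 1 := by
    ext r
    constructor
    · rintro ⟨u, hu, rfl⟩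
      exact ⟨u, by simpa using hu, (himg u).symm⟩
    · rintro ⟨u, hu, rfl⟩
      exact ⟨u, by simpa using hu, (himg u).symm⟩
  have hFcont : Continuous F := by
    apply Continuous.finset_sup'_apply hne
    intro d _
    exact ((continuous_id.inner continuous_const)).div_const _
  have hsphne : (Metric.sphere (0 : Euc n) 1).Nonempty := by
    refine ⟨EuclideanSpace.single (⟨0, by omega⟩ : Fin n) (1 : ℝ), ?_⟩
    simp [EuclideanSpace.norm_single]
  obtain ⟨x, hxs, hxmin⟩ := (isCompact_sphere (0 : Euc n) 1).exists_isMinOn hsphne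
    hFcont.continuousOn
  have hxu : ‖x‖ = 1 := by simpa using hxs
  have hlb : ∀ r ∈ F '' Metric.sphere (0 : Euc n) 1, F x ≤ r := by
    rintro r ⟨u, hu, rfl⟩
    exact hxmin hu
  have hcm : cm D = F x := by
    rw [cm, hR]
    exact le_antisymm (csInf_le ⟨F x, hlb⟩ ⟨x, hxs, rfl⟩)
      (le_csInf ⟨F x, x, hxs, rfl⟩ hlb)
  constructor
  · -- positivity
    rw [hcm]
    have hx : x ∈ pspan (↑D : Set (Euc n)) := by rw [hspan]; exact Set.mem_univ x
    obtain ⟨t, c, htD, hc, hxe⟩ := hx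
    have hsum : (∑ d ∈ t, c d * ⟪x, d⟫_ℝ) = 1 := by
      have : ⟪x, x⟫_ℝ = 1 := by
        rw [real_inner_self_eq_norm_sq, hxu]; norm_num
      calc (∑ d ∈ t, c d * ⟪x, d⟫_ℝ) = ⟪x, ∑ d ∈ t, c d • d⟫_ℝ := by
            rw [inner_sum]
            exact Finset.sum_congr rfl fun d _ => (real_inner_smul_right x d (c d)).symm
        _ = ⟪x, x⟫_ℝ := by rw [← hxe]
        _ = 1 := this
    have hex : ∃ d ∈ t, 0 < c d * ⟪x, d⟫_ℝ := by
      by_contra h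
      push_neg at h
      have : (∑ d ∈ t, c d * ⟪x, d⟫_ℝ) ≤ 0 := Finset.sum_nonpos h
      linarith
    obtain ⟨d, hdt, hdpos⟩ := hex
    have hdD : d ∈ D := by
      have := htD hdt; simpa using this
    have hinnerpos : 0 < ⟪x, d⟫_ℝ := by
      rcases mul_pos_iff.mp hdpos with ⟨-, h2⟩ | ⟨h1, -⟩
      · exact h2
      · exact absurd (hc d hdt) (not_le.mpr h1)
    have : ⟪x, d⟫_ℝ / ‖d‖ ≤ F x := Finset.le_sup' (fun d => ⟪x, d⟫_ℝ / ‖d‖) hdD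
    rw [hunit d hdD] at this
    simpa using lt_of_lt_of_le hinnerpos (by simpa using this)
  · -- cm D < 1
    obtain ⟨u, hu1, huD⟩ := exists_unit_not_mem hn D
    have hFu : F u < 1 := by
      rw [hF]
      rw [Finset.sup'_lt_iff]
      intro d hd
      rw [hunit d hd, div_one]
      exact (inner_lt_one_iff_real_of_norm_eq_one hu1 (hunit d hd)).mpr
        (fun h => huD (h ▸ hd))
    have hle : cm D ≤ F u := by
      rw [cm, hR]
      exact csInf_le ⟨F x, hlb⟩ ⟨u, by simpa using hu1, rfl⟩
    linarith
end
end

section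
/- Let D be a positive basis of unit vectors of ℝ^n. Then the all activity set A(D) contains n vectors that form a linear basis of ℝ^n. -/
noncomputable section

open Matrix
open scoped InnerProductSpace

/-- the all activity set of a positive basis contains `n` vectors forming a
linear basis of `ℝ^n`. -/
theorem allActivity_contains_basis {n : ℕ} (D : Finset (Euc n))
    (hD : IsUnitPosBasis D) :
    ∃ B : Finset (Euc n), (↑B : Set (Euc n)) ⊆ allActivity D ∧ B.card = n ∧
      Submodule.span ℝ (↑B : Set (Euc n)) = ⊤ := by
  classical
  obtain ⟨hunit, hpi, hspanD⟩ := hD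
  rcases Nat.eq_zero_or_pos n with hn | hn
  · subst hn
    refine ⟨∅, by simp, by simp, ?_⟩
    haveI : Subsingleton (Euc 0) := by
      constructor; intro a b; ext i; exact absurd i.2 (by omega)
    rw [eq_top_iff]
    intro x _
    have hx : x = 0 := Subsingleton.elim x 0
    simp [hx]
  haveI : Nonempty (Fin n) := ⟨⟨0, hn⟩⟩
  haveI : Nontrivial (Euc n) := inferInstance
  -- D is nonempty
  have hne : D.Nonempty := by
    obtain ⟨x, hx⟩ := exists_ne (0 : Euc n)
    have hxm : x ∈ pspan (↑D : Set (Euc n)) := by rw [hspanD]; trivial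
    obtain ⟨t, c, hts, hc, hxe⟩ := hxm
    rcases t.eq_empty_or_nonempty with rfl | ⟨d, hd⟩
    · exact absurd (by simpa using hxe) hx
    · exact ⟨d, hts hd⟩
  -- the function to minimize
  set f : Euc n → ℝ := fun u => D.sup' hne fun d => ⟪u, d⟫_ℝ with hf
  have himg : ∀ u : Euc n,
      sSup ((fun d => ⟪u, d⟫_ℝ / ‖d‖) '' (↑D : Set (Euc n))) = f u := by
    intro u
    have : ((fun d => ⟪u, d⟫_ℝ / ‖d‖) '' (↑D : Set (Euc n)))
        = ((fun d => ⟪u, d⟫_ℝ) '' (↑D : Set (Euc n))) := by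
      apply Set.image_congr
      intro d hd
      rw [hunit d (by exact_mod_cast hd), div_one]
    rw [this, ← Finset.sup'_eq_csSup_image D hne]
  have hfcont : Continuous f := by
    have hfe : f = D.sup' hne (fun d u => ⟪u, d⟫_ℝ) := by
      funext u; rw [Finset.sup'_apply]
    rw [hfe]
    exact Continuous.finset_sup' hne fun d _ =>
      Continuous.inner continuous_id continuous_const
  -- minimize over the sphere
  have hsph : (Metric.sphere (0 : Euc n) 1).Nonempty :=
    NormedSpace.sphere_nonempty.mpr zero_le_one
  obtain ⟨u₀, hu₀s, hu₀min⟩ :=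
    (isCompact_sphere (0 : Euc n) 1).exists_isMinOn hsph hfcont.continuousOn
  have hu₀ : ‖u₀‖ = 1 := by simpa using mem_sphere_zero_iff_norm.mp hu₀s
  -- cm D = f u₀
  have hcm : cm D = f u₀ := by
    apply IsLeast.csInf_eq
    constructor
    · exact ⟨u₀, hu₀, (himg u₀).symm⟩
    · rintro r ⟨u, hu, rfl⟩
      rw [himg u]
      exact hu₀min (mem_sphere_zero_iff_norm.mpr hu)
  -- cm D > 0
  have hγpos : 0 < f u₀ := by
    by_contra h
    push_neg at h
    have hu₀m : u₀ ∈ pspan (↑D : Set (Euc n)) := by rw [hspanD]; trivial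
    obtain ⟨t, c, hts, hc, he⟩ := hu₀m
    have h1 : ⟪u₀, u₀⟫_ℝ = 1 := by
      rw [real_inner_self_eq_norm_sq, hu₀]; norm_num
    have h2 : ⟪u₀, u₀⟫_ℝ ≤ 0 := by
      have he2 : ⟪u₀, u₀⟫_ℝ = ⟪u₀, ∑ d ∈ t, c d • d⟫_ℝ := congrArg (fun y => ⟪u₀, y⟫_ℝ) he
      rw [he2, inner_sum]
      apply Finset.sum_nonpos
      intro d hd
      rw [real_inner_smul_right]
      have hdD : d ∈ D := by exact_mod_cast hts hd
      have : ⟪u₀, d⟫_ℝ ≤ f u₀ := Finset.le_sup' _ hdD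
      exact mul_nonpos_of_nonneg_of_nonpos (hc d hd) (this.trans h)
    linarith
  have hu₀cV : u₀ ∈ cV D := ⟨hu₀, by rw [himg, hcm]⟩
  -- the active set at u₀
  set B' : Finset (Euc n) := D.filter (fun d => ⟪d, u₀⟫_ℝ = cm D) with hB'
  have hB'act : (↑B' : Set (Euc n)) ⊆ allActivity D := by
    intro d hd
    rw [hB'] at hd
    simp only [Finset.coe_filter, Set.mem_setOf_eq] at hd
    exact Set.mem_biUnion hu₀cV ⟨hd.1, hd.2⟩
  -- span of B' is everything
  have hspanB' : Submodule.span ℝ (↑B' : Set (Euc n)) = ⊤ := by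
    by_contra hK
    set K := Submodule.span ℝ (↑B' : Set (Euc n)) with hKdef
    have hKo : Kᗮ ≠ ⊥ := fun h => hK (Submodule.orthogonal_eq_bot_iff.mp h)
    obtain ⟨v, hvK, hv0⟩ := (Submodule.ne_bot_iff _).mp hKo
    set w : Euc n := if 0 ≤ ⟪u₀, v⟫_ℝ then v else -v with hw
    have hwK : w ∈ Kᗮ := by
      rw [hw]; split
      · exact hvK
      · exact neg_mem hvK
    have hw0 : w ≠ 0 := by
      rw [hw]; split
      · exact hv0
      · simpa using hv0
    have hwpos : 0 ≤ ⟪u₀, w⟫_ℝ := by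
      rw [hw]; split
      · assumption
      · rw [inner_neg_right]; linarith [not_le.mp (by assumption)]
    have hwn : 0 < ‖w‖ := norm_pos_iff.mpr hw0
    -- orthogonality to active vectors
    have horth : ∀ d ∈ B', ⟪w, d⟫_ℝ = 0 := by
      intro d hd
      have : d ∈ K := Submodule.subset_span (by exact_mod_cast hd)
      rw [real_inner_comm]
      exact (Submodule.mem_orthogonal K w).mp hwK d this
    -- choose step size
    set I : Finset (Euc n) := D.filter (fun d => ⟪d, u₀⟫_ℝ ≠ cm D) with hI
    have hIlt : ∀ d ∈ I, ⟪u₀, d⟫_ℝ < f u₀ := by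
      intro d hd
      rw [hI, Finset.mem_filter] at hd
      have hle : ⟪u₀, d⟫_ℝ ≤ f u₀ := Finset.le_sup' _ hd.1
      rcases lt_or_eq_of_le hle with h | h
      · exact h
      · exact absurd (by rw [real_inner_comm, h, hcm]) hd.2
    set ε : ℝ := if hIne : I.Nonempty then I.inf' hIne (fun d => f u₀ - ⟪u₀, d⟫_ℝ) else 1
      with hε
    have hεpos : 0 < ε := by
      rw [hε]; split
      · apply (Finset.lt_inf'_iff _).mpr
        intro d hd
        linarith [hIlt d hd]
      · norm_num
    have hεle : ∀ d ∈ I, ε ≤ f u₀ - ⟪u₀, d⟫_ℝ := by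
      intro d hd
      rw [hε]
      rw [dif_pos ⟨d, hd⟩]
      exact Finset.inf'_le _ hd
    set τ : ℝ := ε / (2 * ‖w‖) with hτ
    have hτpos : 0 < τ := div_pos hεpos (by positivity)
    set N : ℝ := ‖u₀ + τ • w‖ with hN
    have hN1 : 1 < N := by
      have hsq : N ^ 2 = 1 + 2 * (τ * ⟪u₀, w⟫_ℝ) + τ ^ 2 * ‖w‖ ^ 2 := by
        rw [hN, norm_add_sq_real, hu₀, real_inner_smul_right, norm_smul, mul_pow]
        simp only [Real.norm_eq_abs, abs_of_pos hτpos]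
        ring
      nlinarith [mul_nonneg hτpos.le hwpos, mul_pos (mul_pos hτpos hτpos) (mul_pos hwn hwn),
        norm_nonneg (u₀ + τ • w)]
    have hNpos : 0 < N := lt_trans one_pos hN1
    set u₁ : Euc n := N⁻¹ • (u₀ + τ • w) with hu₁
    have hu₁n : ‖u₁‖ = 1 := by
      rw [hu₁, norm_smul, ← hN, Real.norm_eq_abs, abs_of_pos (inv_pos.mpr hNpos)]
      field_simp
    have hinner : ∀ d : Euc n, ⟪u₁, d⟫_ℝ = N⁻¹ * (⟪u₀, d⟫_ℝ + τ * ⟪w, d⟫_ℝ) := by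
      intro d
      rw [hu₁, real_inner_smul_left, inner_add_left, real_inner_smul_left]
    have hNinv : N⁻¹ < 1 := by
      rw [inv_lt_one_iff₀]; right; exact hN1
    have hNinvpos : 0 < N⁻¹ := inv_pos.mpr hNpos
    have hlt : f u₁ < f u₀ := by
      apply (Finset.sup'_lt_iff hne).mpr
      intro d hd
      rw [hinner d]
      by_cases hdB : d ∈ B'
      · rw [horth d hdB]
        have hdγ : ⟪u₀, d⟫_ℝ = f u₀ := by
          rw [hB', Finset.mem_filter] at hdB
          rw [real_inner_comm, hdB.2, hcm]
        rw [hdγ, mul_zero, add_zero]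
        nlinarith
      · have hdI : d ∈ I := by
          rw [hI, Finset.mem_filter]
          rw [hB', Finset.mem_filter] at hdB
          exact ⟨hd, fun h => hdB ⟨hd, h⟩⟩
        have hX : ⟪u₀, d⟫_ℝ + τ * ⟪w, d⟫_ℝ < f u₀ := by
          have h1 : ⟪w, d⟫_ℝ ≤ ‖w‖ := by
            have := real_inner_le_norm w d
            rwa [hunit d hd, mul_one] at this
          have h2 : τ * ⟪w, d⟫_ℝ ≤ τ * ‖w‖ := by
            exact mul_le_mul_of_nonneg_left h1 hτpos.le
          have h3 : τ * ‖w‖ = ε / 2 := by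
            rw [hτ]; field_simp
          have h4 := hεle d hdI
          linarith
        nlinarith
    have := hu₀min (mem_sphere_zero_iff_norm.mpr hu₁n)
    simp only [Set.mem_setOf_eq] at this
    have : f u₀ ≤ f u₁ := this
    linarith
  -- extract a basis
  obtain ⟨b, hbB', hbspan, hbli⟩ := exists_linearIndependent ℝ (↑B' : Set (Euc n))
  have hbfin : b.Finite := B'.finite_toSet.subset hbB'
  haveI : Fintype b := hbfin.fintype
  have hbspan' : Submodule.span ℝ b = ⊤ := hbspan.trans hspanB'
  have hcard : b.toFinset.card = n := by
    have h1 := finrank_span_set_eq_card (s := b) hbli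
    rw [hbspan', finrank_top, finrank_euclideanSpace_fin] at h1
    omega
  refine ⟨b.toFinset, ?_, hcard, ?_⟩
  · rw [Set.coe_toFinset]
    exact Set.Subset.trans hbB' hB'act
  · rw [Set.coe_toFinset]
    exact hbspan'
end
end

section
/- Let D be a positive basis of unit vectors of ℝ^n, let u ∈ cV(D), and let B ⊆ A(u,D) be a set of n vectors forming a linear basis of ℝ^n, viewed as the n×n matrix whose columns are these vectors. Then cm(D) = 1/√(1ᵀ G(B)⁻¹ 1), where 1 is the all-ones vector. -/
noncomputable section

open Matrix
open scoped InnerProductSpace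

/-- if the columns of `B` are `n` vectors of the active set `A(u, D)` forming a
linear basis of `ℝ^n`, then `cm(D) = 1 / √(1ᵀ G(B)⁻¹ 1)`. -/
theorem cm_eq_of_active_basis {n : ℕ} (D : Finset (Euc n)) (hD : IsUnitPosBasis D)
    (u : Euc n) (hu : u ∈ cV D)
    (B : Matrix (Fin n) (Fin n) ℝ)
    (hBmem : ∀ j, _root_.col B j ∈ activeSet u D)
    (hBinj : Function.Injective (_root_.col B))
    (hBbasis : IsUnit B.det) :
    cm D = 1 / Real.sqrt (grandSum (gram B)⁻¹) := by
  obtain ⟨hu1, hu2⟩ := hu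
  set c := cm D with hc
  -- u is in the positive span of D
  have humem : u ∈ pspan (↑D : Set (Euc n)) := by
    rw [hD.2.2]; trivial
  obtain ⟨t, cf, hts, hcf, hsum⟩ := humem
  -- ⟪u,u⟫ = 1
  have huu : ⟪u, u⟫_ℝ = 1 := by
    rw [real_inner_self_eq_norm_sq, hu1]; norm_num
  have h1 : (1 : ℝ) = ∑ d ∈ t, cf d * ⟪u, d⟫_ℝ := by
    calc (1 : ℝ) = ⟪u, u⟫_ℝ := huu.symm
    _ = ⟪u, ∑ d ∈ t, cf d • d⟫_ℝ := by rw [← hsum]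
    _ = ∑ d ∈ t, cf d * ⟪u, d⟫_ℝ := by
        rw [inner_sum]
        exact Finset.sum_congr rfl fun d _ => real_inner_smul_right u d (cf d)
  -- there is d ∈ t with positive inner product
  have hex : ∃ d ∈ t, (0 : ℝ) < cf d * ⟪u, d⟫_ℝ := by
    apply Finset.exists_lt_of_sum_lt (f := fun _ => (0 : ℝ))
    simp only [Finset.sum_const_zero]
    linarith [h1]
  obtain ⟨d, hdt, hdpos⟩ := hex
  have hdinner : (0 : ℝ) < ⟪u, d⟫_ℝ := by
    by_contra h
    push_neg at h
    exact absurd hdpos (not_lt.mpr (mul_nonpos_of_nonneg_of_nonpos (hcf d hdt) h))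
  have hdD : d ∈ (↑D : Set (Euc n)) := hts hdt
  have hdnorm : ‖d‖ = 1 := hD.1 d hdD
  -- cm D > 0
  have hcpos : (0 : ℝ) < c := by
    have hmem : ⟪u, d⟫_ℝ / ‖d‖ ∈ ((fun d => ⟪u, d⟫_ℝ / ‖d‖) '' (↑D : Set (Euc n))) :=
      ⟨d, hdD, rfl⟩
    have hbdd : BddAbove ((fun d => ⟪u, d⟫_ℝ / ‖d‖) '' (↑D : Set (Euc n))) :=
      (D.finite_toSet.image _).bddAbove
    have hle := le_csSup hbdd hmem
    have hval : (0 : ℝ) < ⟪u, d⟫_ℝ / ‖d‖ := by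
      rw [hdnorm, div_one]; exact hdinner
    exact hu2 ▸ lt_of_lt_of_le hval hle
  have hcne : c ≠ 0 := ne_of_gt hcpos
  -- key linear algebra: Bᵀ *ᵥ u = c • 1
  set u' : Fin n → ℝ := fun i => u i with hu'
  have hBtu : Bᵀ *ᵥ u' = fun _ => c := by
    funext j
    have h := (hBmem j).2
    have : ⟪_root_.col B j, u⟫_ℝ = ∑ i, B i j * u i := by
      simp [PiLp.inner_apply, RCLike.inner_apply, _root_.col, toEuc, mul_comm]
    rw [this] at h
    simpa [Matrix.mulVec, dotProduct, hu'] using h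
  have hdet_t : IsUnit Bᵀ.det := by simpa [Matrix.det_transpose] using hBbasis
  -- one = c⁻¹ • (Bᵀ *ᵥ u')
  have hone : (fun _ => (1 : ℝ)) = c⁻¹ • (Bᵀ *ᵥ u') := by
    rw [hBtu]; funext i; simp [inv_mul_cancel₀ hcne]
  -- grand sum computation
  have hgram : (gram B)⁻¹ = B⁻¹ * Bᵀ⁻¹ := Matrix.mul_inv_rev _ _
  have hmv : (B⁻¹ * Bᵀ⁻¹) *ᵥ (Bᵀ *ᵥ u') = B⁻¹ *ᵥ u' := by
    rw [Matrix.mulVec_mulVec, Matrix.mul_assoc, Matrix.nonsing_inv_mul _ hdet_t,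
      Matrix.mul_one]
  have hdp : (Bᵀ *ᵥ u') ⬝ᵥ (B⁻¹ *ᵥ u') = u' ⬝ᵥ u' := by
    rw [Matrix.mulVec_transpose, Matrix.dotProduct_mulVec, Matrix.vecMul_vecMul,
      Matrix.mul_nonsing_inv _ hBbasis, Matrix.vecMul_one]
  have huu' : u' ⬝ᵥ u' = 1 := by
    have : ⟪u, u⟫_ℝ = ∑ i, u i * u i := by
      simp only [PiLp.inner_apply, RCLike.inner_apply, conj_trivial]
    rw [huu] at this
    simpa [dotProduct, hu'] using this.symm
  have hgs : grandSum (gram B)⁻¹ = c⁻¹ * c⁻¹ := by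
    rw [grandSum, hgram, hone, Matrix.mulVec_smul, hmv, smul_dotProduct,
      dotProduct_smul, hdp, huu']
    simp [smul_eq_mul]
  rw [hgs, Real.sqrt_mul_self (le_of_lt (inv_pos.mpr hcpos)), one_div, inv_inv]
end
end

section
/- Let D° be a minimal positive basis of unit vectors of ℝ^n such that cm(D°) ≥ cm(D') for every minimal positive basis D' of unit vectors of ℝ^n (i.e., D° is an optimal minimal positive basis). Then every subset of D° consisting of n vectors that form a linear basis of ℝ^n is contained in the all activity set A(D°). -/
noncomputable section

open Matrix
open scoped InnerProductSpace

namespace Stmt7Aux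

open Finset

variable {n : ℕ}

/-- The defining set of `cm`. -/
def cmSet (D : Finset (Euc n)) : Set ℝ :=
  {r : ℝ | ∃ u : Euc n, ‖u‖ = 1 ∧
    r = sSup ((fun d => ⟪u, d⟫_ℝ / ‖d‖) '' (↑D : Set (Euc n)))}

lemma cm_eq (D : Finset (Euc n)) : cm D = sInf (cmSet D) := rfl

lemma bddBelow_cmSet (D : Finset (Euc n)) (hne : D.Nonempty)
    (hunit : ∀ d ∈ D, ‖d‖ = 1) : BddBelow (cmSet D) := by
  refine ⟨-1, ?_⟩
  rintro r ⟨u, hu, rfl⟩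
  obtain ⟨d₀, hd₀⟩ := hne
  have hmem : ⟪u, d₀⟫_ℝ / ‖d₀‖ ∈ (fun d => ⟪u, d⟫_ℝ / ‖d‖) '' (↑D : Set (Euc n)) :=
    ⟨d₀, by exact_mod_cast hd₀, rfl⟩
  have hbdd : BddAbove ((fun d => ⟪u, d⟫_ℝ / ‖d‖) '' (↑D : Set (Euc n))) :=
    (D.finite_toSet.image _).bddAbove
  have h1 : (-1 : ℝ) ≤ ⟪u, d₀⟫_ℝ / ‖d₀‖ := by
    rw [hunit d₀ hd₀, div_one]
    have := abs_real_inner_le_norm u d₀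
    rw [hu, hunit d₀ hd₀] at this
    nlinarith [abs_nonneg ⟪u, d₀⟫_ℝ, neg_abs_le ⟪u, d₀⟫_ℝ]
  exact le_trans h1 (le_csSup hbdd hmem)

lemma cm_le_sSup (D : Finset (Euc n)) (hne : D.Nonempty) (hunit : ∀ d ∈ D, ‖d‖ = 1)
    (u : Euc n) (hu : ‖u‖ = 1) :
    cm D ≤ sSup ((fun d => ⟪u, d⟫_ℝ / ‖d‖) '' (↑D : Set (Euc n))) :=
  csInf_le (bddBelow_cmSet D hne hunit) ⟨u, hu, rfl⟩

lemma le_cm (D : Finset (Euc n)) (c : ℝ)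
    (hex : ∃ u : Euc n, ‖u‖ = 1)
    (h : ∀ u : Euc n, ‖u‖ = 1 →
      c ≤ sSup ((fun d => ⟪u, d⟫_ℝ / ‖d‖) '' (↑D : Set (Euc n)))) :
    c ≤ cm D := by
  rw [cm_eq]
  refine le_csInf ?_ ?_
  · obtain ⟨u, hu⟩ := hex
    exact ⟨_, u, hu, rfl⟩
  · rintro r ⟨u, hu, rfl⟩
    exact h u hu

/-- a strictly positive kernel combination for a positively spanning set. -/
lemma exists_kernel (D : Finset (Euc n)) (hne : D.Nonempty)
    (hpspan : pspan (↑D : Set (Euc n)) = Set.univ) :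
    ∃ c : Euc n → ℝ, (∀ d ∈ D, 0 < c d) ∧ (∑ d ∈ D, c d • d) = 0 ∧
      0 < (∑ d ∈ D, c d) := by
  have hmem : (-(∑ d ∈ D, d)) ∈ pspan (↑D : Set (Euc n)) := by
    rw [hpspan]; trivial
  obtain ⟨t, a, hts, ha, hsum⟩ := hmem
  classical
  have htD : t ⊆ D := fun x hx => by exact_mod_cast hts hx
  refine ⟨fun d => 1 + (if d ∈ t then a d else 0), ?_, ?_, ?_⟩
  · intro d _
    by_cases hd : d ∈ t
    · simp only [hd, if_true]; nlinarith [ha d hd]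
    · simp [hd]
  · have ht : ∑ d ∈ D, (if d ∈ t then a d else 0) • d = ∑ d ∈ t, a d • d := by
      rw [← Finset.sum_subset htD (fun x _ hx => by simp [hx])]
      exact Finset.sum_congr rfl (fun x hx => by simp [hx])
    simp only [add_smul, Finset.sum_add_distrib, one_smul, ht, ← hsum]
    abel
  · apply Finset.sum_pos _ hne
    intro d hd
    by_cases h : d ∈ t
    · simp only [h, if_true]; nlinarith [ha d h]
    · simp [h]

end Stmt7Aux
namespace Stmt7Aux2
open Stmt7Aux Finset Submodule

variable {n : ℕ} [DecidableEq (Euc n)]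
set_option linter.unusedSectionVars false

lemma span_top_of_pspan (D : Finset (Euc n))
    (hpspan : pspan (↑D : Set (Euc n)) = Set.univ) :
    Submodule.span ℝ (↑D : Set (Euc n)) = ⊤ := by
  rw [eq_top_iff]
  intro x _
  have hx : x ∈ pspan (↑D : Set (Euc n)) := by rw [hpspan]; trivial
  obtain ⟨t, c, hts, _, rfl⟩ := hx
  exact Submodule.sum_smul_mem _ _ (fun d hd => Submodule.subset_span (hts hd))

lemma span_erase_top (D : Finset (Euc n)) (c : Euc n → ℝ)
    (hc : ∀ d ∈ D, 0 < c d) (hker : (∑ d ∈ D, c d • d) = 0)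
    (hspan : Submodule.span ℝ (↑D : Set (Euc n)) = ⊤) (d : Euc n) (hd : d ∈ D) :
    Submodule.span ℝ (↑(D.erase d) : Set (Euc n)) = ⊤ := by
  classical
  have hdmem : d ∈ Submodule.span ℝ (↑(D.erase d) : Set (Euc n)) := by
    set S := (↑(D.erase d) : Set (Euc n)) with hS
    have hsum : c d • d = -∑ e ∈ D.erase d, c e • e := by
      rw [← Finset.add_sum_erase _ _ hd] at hker
      linear_combination (norm := module) hker
    have key : d = (c d)⁻¹ • -∑ e ∈ D.erase d, c e • e := by
      rw [← hsum, smul_smul, inv_mul_cancel₀ (ne_of_gt (hc d hd)), one_smul]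
    rw [key]
    refine Submodule.smul_mem _ _ (Submodule.neg_mem _ ?_)
    refine Submodule.sum_smul_mem _ _ (fun e he => Submodule.subset_span ?_)
    rw [hS]; exact_mod_cast he
  rw [eq_top_iff, ← hspan, Submodule.span_le]
  intro e he
  rcases eq_or_ne e d with rfl | hne
  · exact hdmem
  · exact Submodule.subset_span (Finset.mem_erase.2 ⟨hne, he⟩)

lemma exists_dual (E : Finset (Euc n)) (hspan : Submodule.span ℝ (↑E : Set (Euc n)) = ⊤)
    (hcard : E.card = n) : ∃ v : Euc n, ∀ e ∈ E, ⟪e, v⟫_ℝ = 1 := by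
  classical
  let T : Euc n →ₗ[ℝ] ({x // x ∈ E} → ℝ) :=
    LinearMap.pi (fun e : {x // x ∈ E} => innerₗ (Euc n) e.1)
  have hker : LinearMap.ker T = ⊥ := by
    rw [LinearMap.ker_eq_bot']
    intro x hx
    have hx' : ∀ e ∈ E, ⟪e, x⟫_ℝ = 0 := by
      intro e he
      have := congrFun hx ⟨e, he⟩
      simpa [T] using this
    have hxx : x ∈ Submodule.span ℝ (↑E : Set (Euc n)) := by rw [hspan]; trivial
    obtain ⟨f, hf⟩ := mem_span_finset.1 hxx
    have hz : ⟪(∑ i ∈ E, f i • i), x⟫_ℝ = 0 := by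
      rw [sum_inner]
      refine Finset.sum_eq_zero (fun e he => ?_)
      rw [real_inner_smul_left, hx' e he, mul_zero]
    rw [hf.2] at hz
    exact (@inner_self_eq_zero ℝ _ _ _ _ x).1 hz
  have hrange : LinearMap.range T = ⊤ := by
    apply Submodule.eq_top_of_finrank_eq
    have h1 := LinearMap.finrank_range_add_finrank_ker T
    rw [hker, finrank_bot, add_zero, finrank_euclideanSpace_fin] at h1
    rw [h1, Module.finrank_fintype_fun_eq_card, Fintype.card_coe, hcard]
  have hmem : (fun _ => (1 : ℝ)) ∈ LinearMap.range T := by rw [hrange]; trivial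
  obtain ⟨v, hv⟩ := hmem
  refine ⟨v, fun e he => ?_⟩
  have := congrFun hv ⟨e, he⟩
  simpa [T] using this

end Stmt7Aux2
namespace Stmt7Comb
open Finset

lemma exists_ge {m : ℕ} (hm : 0 < m) (a : Fin (m+1) → ℝ)
    (h0 : ∑ i, a i = 0) (h2 : ((m:ℝ)+1)/m ≤ ∑ i, (a i)^2) (hb : ∀ i, -1 ≤ a i) :
    ∃ i, 1/(m:ℝ) ≤ a i := by
  classical
  by_contra hcon
  push_neg at hcon
  have hmR : (0:ℝ) < m := by exact_mod_cast hm
  set P : Finset (Fin (m+1)) := univ.filter (fun i => 0 ≤ a i) with hP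
  set S : ℝ := ∑ i ∈ P, a i with hSdef
  have hsplit : S + ∑ i ∈ univ.filter (fun i => ¬ 0 ≤ a i), a i = 0 := by
    rw [hSdef, hP, Finset.sum_filter_add_sum_filter_not]; exact h0
  have hQ : ∑ i ∈ univ.filter (fun i => ¬ 0 ≤ a i), a i = -S := by linarith
  have hsq : ∑ i, (a i)^2 = (∑ i ∈ P, (a i)^2) +
      ∑ i ∈ univ.filter (fun i => ¬ 0 ≤ a i), (a i)^2 :=
    (Finset.sum_filter_add_sum_filter_not _ _ _).symm
  have hb1 : ∑ i ∈ P, (a i)^2 ≤ S * (1/m) := by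
    rw [hSdef, Finset.sum_mul]
    refine Finset.sum_le_sum (fun i hi => ?_)
    have h1 : 0 ≤ a i := (Finset.mem_filter.1 hi).2
    have h2' : a i ≤ 1/m := le_of_lt (hcon i)
    nlinarith
  have hb2 : ∑ i ∈ univ.filter (fun i => ¬ 0 ≤ a i), (a i)^2 ≤ S := by
    have : ∑ i ∈ univ.filter (fun i => ¬ 0 ≤ a i), (a i)^2 ≤
        ∑ i ∈ univ.filter (fun i => ¬ 0 ≤ a i), (- a i) := by
      refine Finset.sum_le_sum (fun i hi => ?_)
      have h1 : a i < 0 := lt_of_not_ge (Finset.mem_filter.1 hi).2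
      have h2' : -1 ≤ a i := hb i
      nlinarith
    rw [Finset.sum_neg_distrib, hQ] at this
    simpa using this
  have hS1 : 1 ≤ S := by
    have h3 : ((m:ℝ)+1)/m ≤ S * (1/m) + S := le_trans h2 (by rw [hsq]; linarith)
    have h4 : S * (1/m) + S = S * (((m:ℝ)+1)/m) := by field_simp; ring
    rw [h4] at h3
    have h5 : (0:ℝ) < ((m:ℝ)+1)/m := by positivity
    nlinarith
  -- existence of a negative entry
  have hneg : ∃ i, a i < 0 := by
    by_contra hall
    push_neg at hall
    have := (Finset.sum_eq_zero_iff_of_nonneg (fun i _ => hall i)).1 h0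
    have hz : ∑ i, (a i)^2 = 0 :=
      Finset.sum_eq_zero (fun i _ => by rw [this i (Finset.mem_univ i)]; ring)
    rw [hz] at h2
    have : (0:ℝ) < ((m:ℝ)+1)/m := by positivity
    linarith
  obtain ⟨i0, hi0⟩ := hneg
  have hi0P : i0 ∉ P := by
    rw [hP, Finset.mem_filter]
    push_neg
    intro _
    linarith
  have hcardP : P.card ≤ m := by
    have hsub : P ⊆ univ.erase i0 := by
      intro i hi
      refine Finset.mem_erase.2 ⟨?_, Finset.mem_univ i⟩
      rintro rfl
      exact hi0P hi
    calc P.card ≤ (univ.erase i0).card := Finset.card_le_card hsub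
    _ = m := by rw [Finset.card_erase_of_mem (Finset.mem_univ i0)]; simp
  rcases Finset.eq_empty_or_nonempty P with hPe | hPne
  · rw [hSdef, hPe, Finset.sum_empty] at hS1; linarith
  · have hlt : S < ∑ i ∈ P, (1/(m:ℝ)) :=
      Finset.sum_lt_sum_of_nonempty hPne (fun i _ => hcon i)
    rw [Finset.sum_const] at hlt
    have : (P.card : ℝ) * (1/m) ≤ 1 := by
      rw [mul_one_div, div_le_one hmR]
      exact_mod_cast hcardP
    rw [nsmul_eq_mul] at hlt
    linarith
end Stmt7Comb
namespace Stmt7Simplex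
open Finset Submodule

variable (n : ℕ)

/-- the all-ones vector. -/
def oneV : Euc (n+1) := WithLp.toLp 2 (fun _ => (1:ℝ))

/-- vertices of a centered simplex, unnormalized. -/
def wv (i : Fin (n+1)) : Euc (n+1) :=
  EuclideanSpace.single i (1:ℝ) - ((n:ℝ)+1)⁻¹ • oneV n

lemma inner_one_one : ⟪oneV n, oneV n⟫_ℝ = (n:ℝ)+1 := by
  rw [PiLp.inner_apply]
  simp [oneV]

lemma inner_single_one (i : Fin (n+1)) :
    ⟪EuclideanSpace.single i (1:ℝ), oneV n⟫_ℝ = 1 := by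
  rw [EuclideanSpace.inner_single_left]
  simp [oneV]

lemma inner_one_single (i : Fin (n+1)) :
    ⟪oneV n, EuclideanSpace.single i (1:ℝ)⟫_ℝ = 1 := by
  rw [real_inner_comm]; exact inner_single_one n i

lemma inner_single_single (i j : Fin (n+1)) :
    ⟪EuclideanSpace.single i (1:ℝ), EuclideanSpace.single j (1:ℝ)⟫_ℝ
      = if i = j then 1 else 0 := by
  rw [EuclideanSpace.inner_single_left]
  rcases eq_or_ne i j with rfl | h
  · simp [EuclideanSpace.single_apply]
  · simp [EuclideanSpace.single_apply, h, Ne.symm h]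

lemma inner_w (i j : Fin (n+1)) :
    ⟪wv n i, wv n j⟫_ℝ = (if i = j then (1:ℝ) else 0) - ((n:ℝ)+1)⁻¹ := by
  have hne : ((n:ℝ)+1) ≠ 0 := by positivity
  unfold wv
  rw [inner_sub_left, inner_sub_right, inner_sub_right, real_inner_smul_left,
    real_inner_smul_left, real_inner_smul_right, real_inner_smul_right,
    inner_single_single, inner_single_one, inner_one_single, inner_one_one]
  field_simp
  ring

lemma inner_one_w (i : Fin (n+1)) : ⟪oneV n, wv n i⟫_ℝ = 0 := by
  have hne : ((n:ℝ)+1) ≠ 0 := by positivity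
  unfold wv
  rw [inner_sub_right, real_inner_smul_right, inner_one_single, inner_one_one]
  field_simp
  ring

lemma inner_w_apply (i : Fin (n+1)) (y : Euc (n+1)) (hy : ⟪oneV n, y⟫_ℝ = 0) :
    ⟪wv n i, y⟫_ℝ = y i := by
  unfold wv
  rw [inner_sub_left, real_inner_smul_left, hy, mul_zero, sub_zero,
    EuclideanSpace.inner_single_left]
  simp

lemma sum_single_eq_one : (∑ i, EuclideanSpace.single i (1:ℝ)) = oneV n := by
  ext k
  have : (∑ i, EuclideanSpace.single i (1:ℝ)) k
      = ∑ i, (EuclideanSpace.single i (1:ℝ) : Euc (n+1)) k := by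
    simp
  rw [this]
  simp [EuclideanSpace.single_apply, oneV]

lemma sum_w : (∑ i, wv n i) = 0 := by
  unfold wv
  rw [Finset.sum_sub_distrib, sum_single_eq_one, Finset.sum_const]
  simp only [card_univ, Fintype.card_fin]
  have hne : ((n:ℝ)+1) ≠ 0 := by positivity
  rw [← Nat.cast_smul_eq_nsmul ℝ, smul_smul]
  push_cast
  rw [mul_inv_cancel₀ hne, one_smul, sub_self]

/-- the hyperplane orthogonal to the all ones vector. -/
def Wsub : Submodule ℝ (Euc (n+1)) := (ℝ ∙ (oneV n))ᗮ

lemma one_ne_zero' : oneV n ≠ 0 := by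
  intro h
  have := congrArg (fun x : Euc (n+1) => x 0) h
  simp [oneV] at this

lemma rank_W : Module.finrank ℝ (Wsub n) = n := by
  have h := Submodule.finrank_add_finrank_orthogonal (K := (ℝ ∙ (oneV n)))
  rw [finrank_span_singleton (one_ne_zero' n), finrank_euclideanSpace_fin] at h
  have : Module.finrank ℝ (Wsub n) = Module.finrank ℝ ((ℝ ∙ (oneV n))ᗮ) := rfl
  omega

end Stmt7Simplex
namespace Stmt7Simplex
open Finset Submodule

set_option maxHeartbeats 1000000 in
lemma exists_simplex {n : ℕ} (hn : 0 < n) :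
    ∃ R : Finset (Euc n), IsUnitPosBasis R ∧ R.card = n + 1 ∧ (1:ℝ)/n ≤ cm R := by
  classical
  have hnR : (0:ℝ) < n := by exact_mod_cast hn
  have hq : (0:ℝ) < ((n:ℝ)+1)/n := by positivity
  set κ := Real.sqrt (((n:ℝ)+1)/n) with hκdef
  have hκsq : κ ^ 2 = ((n:ℝ)+1)/n := Real.sq_sqrt (le_of_lt hq)
  have hκpos : 0 < κ := Real.sqrt_pos.2 hq
  have hwmem : ∀ i, wv n i ∈ Wsub n := fun i =>
    Submodule.mem_orthogonal_singleton_iff_inner_right.2 (inner_one_w n i)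
  set ω : Fin (n+1) → Wsub n := fun i => ⟨κ • wv n i, Submodule.smul_mem _ _ (hwmem i)⟩
    with hωdef
  set φ : Wsub n ≃ₗᵢ[ℝ] Euc n :=
    ((stdOrthonormalBasis ℝ (Wsub n)).reindex (finCongr (rank_W n))).repr with hφdef
  set v : Fin (n+1) → Euc n := fun i => φ (ω i) with hvdef
  -- Gram computations
  have hωinner : ∀ i j, ⟪ω i, ω j⟫_ℝ = κ^2 * ((if i = j then (1:ℝ) else 0) - ((n:ℝ)+1)⁻¹) := by
    intro i j
    rw [Submodule.coe_inner, hωdef]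
    simp only
    rw [real_inner_smul_left, real_inner_smul_right, inner_w]
    ring
  have hvv : ∀ i j, ⟪v i, v j⟫_ℝ = (if i = j then (1:ℝ) else -1/n) := by
    intro i j
    rw [hvdef]
    simp only
    rw [φ.inner_map_map, hωinner, hκsq]
    have hne : ((n:ℝ)+1) ≠ 0 := by positivity
    rcases eq_or_ne i j with rfl | h
    · simp only [if_pos rfl, if_true]; field_simp; ring
    · simp only [if_neg h]; field_simp; ring
  have hvnorm : ∀ i, ‖v i‖ = 1 := by
    intro i
    have h : ‖v i‖^2 = 1 := by
      rw [← real_inner_self_eq_norm_sq, hvv i i, if_pos rfl]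
    calc ‖v i‖ = Real.sqrt (‖v i‖^2) := (Real.sqrt_sq (norm_nonneg _)).symm
    _ = 1 := by rw [h]; exact Real.sqrt_one
  have hvsum : (∑ i, v i) = 0 := by
    have hω0 : (∑ i, ω i) = 0 := by
      have hc : ((∑ i, ω i : Wsub n) : Euc (n+1)) = ∑ i, (κ • wv n i) := by
        rw [hωdef]
        exact_mod_cast AddSubmonoidClass.coe_finset_sum _ _
      have : ((∑ i, ω i : Wsub n) : Euc (n+1)) = 0 := by
        rw [hc, ← Finset.smul_sum, sum_w, smul_zero]
      exact_mod_cast this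
    rw [hvdef]
    simp only
    rw [← map_sum φ, hω0, map_zero]
  have hframe : ∀ u : Euc n, (∑ i, ⟪v i, u⟫_ℝ^2) = ((n:ℝ)+1)/n * ‖u‖^2 := by
    intro u
    set y := φ.symm u with hy
    have hyu : φ y = u := φ.apply_symm_apply u
    have hy0 : ⟪oneV n, (y : Euc (n+1))⟫_ℝ = 0 :=
      Submodule.mem_orthogonal_singleton_iff_inner_right.1 y.2
    have h1 : ∀ i, ⟪v i, u⟫_ℝ = κ * (y : Euc (n+1)) i := by
      intro i
      rw [← hyu, hvdef]
      simp only
      rw [φ.inner_map_map, Submodule.coe_inner, hωdef]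
      simp only
      rw [real_inner_smul_left, inner_w_apply n i _ hy0]
    have h2 : (∑ i, ⟪v i, u⟫_ℝ^2) = κ^2 * ∑ i, ((y : Euc (n+1)) i)^2 := by
      rw [Finset.mul_sum]
      exact Finset.sum_congr rfl (fun i _ => by rw [h1 i]; ring)
    have h3 : (∑ i, ((y : Euc (n+1)) i)^2) = ‖u‖^2 := by
      have hip : ⟪(y : Euc (n+1)), (y : Euc (n+1))⟫_ℝ = ∑ i, ((y : Euc (n+1)) i)^2 := by
        rw [PiLp.inner_apply]
        exact Finset.sum_congr rfl (fun i _ => by simp [sq])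
      have hny : ‖(y : Euc (n+1))‖ = ‖u‖ := by
        rw [← hyu]
        rw [φ.norm_map y]
        rfl
      rw [← hip, real_inner_self_eq_norm_sq, hny]
    rw [h2, h3, hκsq]
  -- injectivity
  have hinj : Function.Injective v := by
    intro i j hij
    by_contra h
    have h1 : ⟪v i, v j⟫_ℝ = -1/n := by rw [hvv, if_neg h]
    have h2 : ⟪v i, v j⟫_ℝ = 1 := by rw [hij, hvv, if_pos rfl]
    rw [h2] at h1
    have hlt : (0:ℝ) < 1/n := by positivity
    have h1n : -1/(n:ℝ) = -(1/n) := by ring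
    rw [h1n] at h1
    linarith
  set R : Finset (Euc n) := Finset.image v Finset.univ with hRdef
  have hmemR : ∀ d, d ∈ R ↔ ∃ i, v i = d := by
    intro d
    rw [hRdef]
    simp [Finset.mem_image]
  have hcardR : R.card = n + 1 := by
    rw [hRdef, Finset.card_image_of_injective _ hinj, Finset.card_univ, Fintype.card_fin]
  refine ⟨R, ⟨?_, ?_, ?_⟩, hcardR, ?_⟩
  · -- unit vectors
    intro d hd
    obtain ⟨i, rfl⟩ := (hmemR d).1 hd
    exact hvnorm i
  · -- PosIndep
    intro d hd hmem
    obtain ⟨i, rfl⟩ := (hmemR d).1 hd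
    obtain ⟨t, c, hts, hc, hsum⟩ := hmem
    have hone : ⟪v i, v i⟫_ℝ = 1 := by rw [hvv, if_pos rfl]
    have h1' : ⟪(∑ d ∈ t, c d • d), v i⟫_ℝ = 1 := by rw [← hsum]; exact hone
    have hneg : ⟪(∑ d ∈ t, c d • d), v i⟫_ℝ ≤ 0 := by
      rw [sum_inner]
      refine Finset.sum_nonpos (fun e he => ?_)
      have het : (e : Euc n) ∈ (↑R : Set (Euc n)) \ {v i} := hts he
      obtain ⟨heR, hene⟩ := het
      obtain ⟨j, rfl⟩ := (hmemR e).1 (by exact_mod_cast heR)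
      have hji : j ≠ i := by
        rintro rfl
        exact hene rfl
      rw [real_inner_smul_left]
      have hip : ⟪v j, v i⟫_ℝ = -1/n := by rw [hvv, if_neg hji]
      rw [hip]
      have hcc : 0 ≤ c (v j) := hc _ he
      have hneg' : -1/(n:ℝ) ≤ 0 := by
        rw [neg_div]
        have : (0:ℝ) ≤ 1/n := by positivity
        linarith
      exact mul_nonpos_of_nonneg_of_nonpos hcc hneg'
    linarith
  · -- pspan = univ
    apply Set.eq_univ_of_forall
    intro x
    have horth : ∀ z : Euc n, (∀ i, ⟪v i, z⟫_ℝ = 0) → z = 0 := by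
      intro z hz
      have h1 : (∑ i, ⟪v i, z⟫_ℝ^2) = 0 :=
        Finset.sum_eq_zero (fun i _ => by rw [hz i]; ring)
      rw [hframe z] at h1
      have h2 : ‖z‖^2 = 0 := by
        have hq' : ((n:ℝ)+1)/n ≠ 0 := ne_of_gt hq
        exact (mul_eq_zero.1 h1).resolve_left hq'
      have : ‖z‖ = 0 := by nlinarith [norm_nonneg z]
      exact norm_eq_zero.1 this
    have hspan : Submodule.span ℝ (Set.range v) = ⊤ := by
      have hbot : (Submodule.span ℝ (Set.range v))ᗮ = ⊥ := by
        rw [Submodule.eq_bot_iff]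
        intro z hz
        refine horth z (fun i => ?_)
        have := (Submodule.mem_orthogonal _ z).1 hz (v i)
          (Submodule.subset_span ⟨i, rfl⟩)
        exact this
      exact Submodule.orthogonal_eq_bot_iff.1 hbot
    have hx : x ∈ Submodule.span ℝ (Set.range v) := by rw [hspan]; trivial
    obtain ⟨b, hb⟩ := (mem_span_range_iff_exists_fun ℝ).1 hx
    set M := ∑ i, |b i| with hM
    have hMb : ∀ i, -b i ≤ M := by
      intro i
      have h1 : |b i| ≤ M := Finset.single_le_sum (fun j _ => abs_nonneg (b j)) (Finset.mem_univ i)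
      have := neg_abs_le (b i)
      linarith
    have hcval : ∀ i : Fin (n+1), (if h : ∃ j, v j = v i then b h.choose else 0) = b i := by
      intro i
      have hex : ∃ j, v j = v i := ⟨i, rfl⟩
      rw [dif_pos hex]
      exact congrArg b (hinj hex.choose_spec)
    refine ⟨R, fun d => (if h : ∃ i, v i = d then b h.choose else 0) + M, le_refl _, ?_, ?_⟩
    · intro d hd
      obtain ⟨i, rfl⟩ := (hmemR d).1 hd
      simp only [hcval i]
      linarith [hMb i]
    · rw [hRdef, Finset.sum_image (fun a _ b _ h => hinj h)]
      simp only [hcval]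
      simp only [add_smul]
      rw [Finset.sum_add_distrib, hb, ← Finset.smul_sum, hvsum, smul_zero, add_zero]
  · -- cm bound
    refine Stmt7Aux.le_cm R ((1:ℝ)/n) ⟨EuclideanSpace.single ⟨0, by omega⟩ (1:ℝ), by
      rw [EuclideanSpace.norm_single]; exact norm_one⟩ ?_
    intro u hu
    have h0 : (∑ i, ⟪v i, u⟫_ℝ) = 0 := by
      rw [← sum_inner, hvsum]
      exact inner_zero_left _
    have h2 : ((n:ℝ)+1)/n ≤ ∑ i, ⟪v i, u⟫_ℝ^2 := by
      rw [hframe u, hu]; norm_num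
    have hb : ∀ j, (-1:ℝ) ≤ ⟪v j, u⟫_ℝ := by
      intro j
      have h1 := abs_real_inner_le_norm (v j) u
      rw [hvnorm j, hu, one_mul] at h1
      linarith [neg_abs_le ⟪v j, u⟫_ℝ]
    obtain ⟨i, hi⟩ := Stmt7Comb.exists_ge hn (fun i => ⟪v i, u⟫_ℝ) h0 h2 hb
    have hbdd : BddAbove ((fun d => ⟪u, d⟫_ℝ / ‖d‖) '' (↑R : Set (Euc n))) :=
      (R.finite_toSet.image _).bddAbove
    have hmem : ⟪u, v i⟫_ℝ / ‖v i‖ ∈ (fun d => ⟪u, d⟫_ℝ / ‖d‖) '' (↑R : Set (Euc n)) :=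
      ⟨v i, by exact_mod_cast (hmemR (v i)).2 ⟨i, rfl⟩, rfl⟩
    have hval : ⟪u, v i⟫_ℝ / ‖v i‖ = ⟪v i, u⟫_ℝ := by
      rw [hvnorm i, div_one, real_inner_comm]
    calc (1:ℝ)/n ≤ ⟪v i, u⟫_ℝ := hi
    _ = ⟪u, v i⟫_ℝ / ‖v i‖ := hval.symm
    _ ≤ _ := le_csSup hbdd hmem

end Stmt7Simplex
set_option maxHeartbeats 1000000 in
/-- every `n`-element linear basis contained in an optimal minimal positive basis
lies in the all activity set. -/
theorem basis_subset_allActivity_of_optimal_minimal {n : ℕ} (D : Finset (Euc n))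
    (hD : IsUnitPosBasis D) (hcard : D.card = n + 1)
    (hopt : ∀ D' : Finset (Euc n), IsUnitPosBasis D' → D'.card = n + 1 → cm D' ≤ cm D)
    (B : Finset (Euc n)) (hBD : B ⊆ D) (hBcard : B.card = n)
    (hBspan : Submodule.span ℝ (↑B : Set (Euc n)) = ⊤) :
    (↑B : Set (Euc n)) ⊆ allActivity D := by
  classical
  rcases Nat.eq_zero_or_pos n with hn0 | hn
  · subst hn0
    have hB : B = ∅ := Finset.card_eq_zero.1 hBcard
    rw [hB]
    simp
  have hnR : (0:ℝ) < n := by exact_mod_cast hn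
  have hDne : D.Nonempty := Finset.card_pos.1 (by rw [hcard]; omega)
  have hunit := hD.1
  have hpspan := hD.2.2
  obtain ⟨R, hRbasis, hRcard, hRcm⟩ := Stmt7Simplex.exists_simplex hn
  have hγlow : (1:ℝ)/n ≤ cm D := le_trans hRcm (hopt R hRbasis hRcard)
  have hγpos : 0 < cm D := lt_of_lt_of_le (by positivity) hγlow
  obtain ⟨c0, hc0pos, hc0ker, hc0S⟩ := Stmt7Aux.exists_kernel D hDne hpspan
  set S : ℝ := ∑ d ∈ D, c0 d with hSdef
  set c : Euc n → ℝ := fun d => c0 d / S with hcdef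
  have hcpos : ∀ d ∈ D, 0 < c d := fun d hd => div_pos (hc0pos d hd) hc0S
  have hcker : (∑ d ∈ D, c d • d) = 0 := by
    have : ∀ d, c d • d = S⁻¹ • (c0 d • d) := by
      intro d
      show (c0 d / S) • d = S⁻¹ • (c0 d • d)
      rw [smul_smul, div_eq_mul_inv, mul_comm]
    rw [Finset.sum_congr rfl (fun d _ => this d), ← Finset.smul_sum, hc0ker, smul_zero]
  have hcsum : (∑ d ∈ D, c d) = 1 := by
    rw [hcdef, ← Finset.sum_div, ← hSdef, div_self (ne_of_gt hc0S)]
  have hspanD : Submodule.span ℝ (↑D : Set (Euc n)) = ⊤ :=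
    Stmt7Aux2.span_top_of_pspan D hpspan
  -- dual vectors, with the key properties
  have hprop : ∀ d ∈ D, ∃ v : Euc n, (∀ e ∈ D.erase d, ⟪e, v⟫_ℝ = 1) ∧
      ⟪d, v⟫_ℝ = 1 - 1/(c d) ∧ ‖v‖ ≤ n := by
    intro d hd
    have hespan : Submodule.span ℝ (↑(D.erase d) : Set (Euc n)) = ⊤ :=
      Stmt7Aux2.span_erase_top D c hcpos hcker hspanD d hd
    have hecard : (D.erase d).card = n := by
      rw [Finset.card_erase_of_mem hd, hcard]
      omega
    obtain ⟨v, hv⟩ := Stmt7Aux2.exists_dual (D.erase d) hespan hecard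
    have hvd : ⟪d, v⟫_ℝ = 1 - 1/(c d) := by
      have h0 : ⟪(∑ e ∈ D, c e • e), v⟫_ℝ = 0 := by rw [hcker]; exact inner_zero_left _
      rw [sum_inner] at h0
      have h1 : ∀ e ∈ D.erase d, ⟪c e • e, v⟫_ℝ = c e := by
        intro e he
        rw [real_inner_smul_left, hv e he, mul_one]
      rw [← Finset.add_sum_erase _ _ hd, Finset.sum_congr rfl h1,
        real_inner_smul_left] at h0
      have h2 : (∑ e ∈ D.erase d, c e) = 1 - c d := by
        have := Finset.add_sum_erase D c hd
        rw [hcsum] at this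
        linarith
      rw [h2] at h0
      have hcd := hcpos d hd
      have h3 : ⟪d, v⟫_ℝ = (c d - 1)/(c d) := by
        rw [eq_div_iff (ne_of_gt hcd)]
        linear_combination h0
      rw [h3, sub_div, div_self (ne_of_gt hcd)]
    have hvnorm : ‖v‖ ≤ n := by
      have hvne : v ≠ 0 := by
        have hene : (D.erase d).Nonempty := Finset.card_pos.1 (by rw [hecard]; omega)
        obtain ⟨e, he⟩ := hene
        intro hv0
        have := hv e he
        rw [hv0, inner_zero_right] at this
        exact one_ne_zero this.symm
      have hnv : (0:ℝ) < ‖v‖ := norm_pos_iff.2 hvne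
      have hu : ‖(‖v‖⁻¹ • v)‖ = 1 := by
        rw [norm_smul, norm_inv, norm_norm, inv_mul_cancel₀ (ne_of_gt hnv)]
      have h1 : cm D ≤ sSup ((fun e => ⟪(‖v‖⁻¹ • v), e⟫_ℝ / ‖e‖) '' (↑D : Set (Euc n))) :=
        Stmt7Aux.cm_le_sSup D hDne hunit _ hu
      have h2 : sSup ((fun e => ⟪(‖v‖⁻¹ • v), e⟫_ℝ / ‖e‖) '' (↑D : Set (Euc n))) ≤ ‖v‖⁻¹ := by
        refine csSup_le ?_ ?_
        · obtain ⟨e, he⟩ := hDne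
          exact ⟨_, ⟨e, by exact_mod_cast he, rfl⟩⟩
        · rintro r ⟨e, heD, rfl⟩
          have heD' : e ∈ D := by exact_mod_cast heD
          show ⟪‖v‖⁻¹ • v, e⟫_ℝ / ‖e‖ ≤ ‖v‖⁻¹
          rw [hunit e heD', div_one, real_inner_smul_left]
          have hle : ⟪v, e⟫_ℝ ≤ 1 := by
            rcases eq_or_ne e d with rfl | hne
            · rw [real_inner_comm, hvd]
              have := hcpos e hd
              have h3 : (0:ℝ) < 1 / c e := by positivity
              linarith
            · rw [real_inner_comm, hv e (Finset.mem_erase.2 ⟨hne, heD'⟩)]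
          have : (0:ℝ) ≤ ‖v‖⁻¹ := by positivity
          nlinarith
      have h3 : cm D ≤ ‖v‖⁻¹ := le_trans h1 h2
      -- 1/n ≤ cm D ≤ 1/‖v‖ so ‖v‖ ≤ n
      have h4 : (1:ℝ)/n ≤ ‖v‖⁻¹ := le_trans hγlow h3
      rw [div_le_iff₀ hnR] at h4
      have h5 : ‖v‖⁻¹ * ‖v‖ = 1 := inv_mul_cancel₀ (ne_of_gt hnv)
      nlinarith
    exact ⟨v, hv, hvd, hvnorm⟩
  -- all kernel coefficients are at least 1/(n+1)
  have hmain : ∀ d ∈ D, 1/((n:ℝ)+1) ≤ c d := by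
    intro d hd
    obtain ⟨v, hv, hvd, hvnorm⟩ := hprop d hd
    have hcd := hcpos d hd
    rcases le_or_gt 1 (c d) with h1 | h1
    · have : 1/((n:ℝ)+1) ≤ 1 := by
        rw [div_le_one (by positivity)]
        linarith
      linarith
    · have hgt : 1 < 1 / c d := by
        rw [lt_div_iff₀ hcd]
        linarith
      have habs : |⟪d, v⟫_ℝ| ≤ ‖v‖ := by
        have := abs_real_inner_le_norm d v
        rw [hunit d hd, one_mul] at this
        exact this
      have hneg : ⟪d, v⟫_ℝ < 0 := by rw [hvd]; linarith
      rw [abs_of_neg hneg, hvd] at habs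
      have h2 : 1 / c d ≤ (n:ℝ) + 1 := by linarith
      rw [div_le_iff₀ hcd] at h2
      rw [div_le_iff₀ (by positivity : (0:ℝ) < (n:ℝ)+1)]
      linarith [mul_comm (c d) ((n:ℝ)+1)]
  have hceq : ∀ d ∈ D, c d = 1/((n:ℝ)+1) := by
    have hsum0 : (∑ d ∈ D, (c d - 1/((n:ℝ)+1))) = 0 := by
      rw [Finset.sum_sub_distrib, hcsum, Finset.sum_const, hcard, nsmul_eq_mul]
      push_cast
      field_simp
      ring
    intro d hd
    have := (Finset.sum_eq_zero_iff_of_nonneg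
      (fun e he => sub_nonneg.2 (hmain e he))).1 hsum0 d hd
    linarith
  -- Gram matrix identities
  have hGram : ∀ d ∈ D, ∀ e ∈ D.erase d, ⟪e, d⟫_ℝ = -1/n := by
    intro d hd e he
    obtain ⟨v, hv, hvd, hvnorm⟩ := hprop d hd
    have hvd' : ⟪d, v⟫_ℝ = -(n:ℝ) := by
      rw [hvd, hceq d hd]
      have : (0:ℝ) < (n:ℝ)+1 := by positivity
      field_simp
      ring
    have hveq : v = -(n:ℝ) • d := by
      have hnorm2 : ‖v + (n:ℝ) • d‖^2 ≤ 0 := by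
        have hvd2 : ⟪v, d⟫_ℝ = -(n:ℝ) := by rw [real_inner_comm]; exact hvd'
        rw [norm_add_sq_real, real_inner_smul_right, hvd2, norm_smul]
        have hnn : ‖(n:ℝ)‖ = (n:ℝ) := by
          rw [Real.norm_eq_abs, abs_of_pos hnR]
        rw [hnn, hunit d hd, mul_one]
        have hv2 : ‖v‖^2 ≤ (n:ℝ)^2 := by nlinarith [norm_nonneg v]
        nlinarith
      have hz : v + (n:ℝ) • d = 0 := by
        have h00 : ‖v + (n:ℝ) • d‖^2 = 0 := le_antisymm hnorm2 (sq_nonneg _)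
        have := sq_eq_zero_iff.1 h00
        exact norm_eq_zero.1 this
      rw [neg_smul]
      linear_combination (norm := module) hz
    have h6 : ⟪e, v⟫_ℝ = 1 := hv e he
    rw [hveq, real_inner_smul_right] at h6
    have hne0 : (n:ℝ) ≠ 0 := ne_of_gt hnR
    field_simp at h6 ⊢
    linear_combination -h6
  -- conclusion
  intro b hb
  have hbB : b ∈ B := by exact_mod_cast hb
  have hbD : b ∈ D := hBD hbB
  obtain ⟨d₀, hd₀D, hd₀ne⟩ := Finset.exists_mem_ne (by rw [hcard]; omega) b
  have hbE : b ∈ D.erase d₀ := Finset.mem_erase.2 ⟨Ne.symm hd₀ne, hbD⟩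
  have hnormu : ‖-d₀‖ = 1 := by rw [norm_neg]; exact hunit d₀ hd₀D
  have hsup : sSup ((fun e => ⟪-d₀, e⟫_ℝ / ‖e‖) '' (↑D : Set (Euc n))) = 1/n := by
    refine le_antisymm ?_ ?_
    · refine csSup_le ⟨_, ⟨b, by exact_mod_cast hbD, rfl⟩⟩ ?_
      rintro r ⟨e, heD, rfl⟩
      have heD' : e ∈ D := by exact_mod_cast heD
      show ⟪-d₀, e⟫_ℝ / ‖e‖ ≤ 1/(n:ℝ)
      rw [hunit e heD', div_one, inner_neg_left]
      rcases eq_or_ne e d₀ with heq | hne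
      · have h1 : ⟪d₀, d₀⟫_ℝ = 1 := by
          rw [real_inner_self_eq_norm_sq, hunit d₀ hd₀D]
          norm_num
        rw [heq, h1]
        have : (0:ℝ) < 1/n := by positivity
        linarith
      · have h2 := hGram d₀ hd₀D e (Finset.mem_erase.2 ⟨hne, heD'⟩)
        rw [real_inner_comm] at h2
        rw [h2, neg_div, neg_neg]
    · have hval : ⟪-d₀, b⟫_ℝ / ‖b‖ = 1/n := by
        have hg : ⟪d₀, b⟫_ℝ = -1/n := by
          rw [real_inner_comm]
          exact hGram d₀ hd₀D b hbE
        rw [hunit b hbD, div_one, inner_neg_left, hg, neg_div, neg_neg]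
      rw [← hval]
      exact le_csSup ((D.finite_toSet.image _).bddAbove) ⟨b, by exact_mod_cast hbD, rfl⟩
  have hcm : cm D = 1/n := by
    refine le_antisymm ?_ hγlow
    have := Stmt7Aux.cm_le_sSup D hDne hunit (-d₀) hnormu
    rw [hsup] at this
    exact this
  have hcV : (-d₀) ∈ cV D := ⟨hnormu, by rw [hsup, hcm]⟩
  have hact : b ∈ activeSet (-d₀) D := by
    refine ⟨hbD, ?_⟩
    rw [inner_neg_right]
    have h3 := hGram d₀ hd₀D b hbE
    rw [h3, hcm]
    ring
  exact Set.mem_biUnion hcV hact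
end
end

section
/- Let D be a positive basis of ℝ^n of size s belonging to Ω, with partition D = D_1 ∪ ... ∪ D_{s−n} into minimal positive bases D_i of the subspaces L_i (dim L_i = m_i, so D_i has m_i + 1 vectors), where ℝ^n = L_1 ⊕ ... ⊕ L_{s−n}. Let B ⊆ D be a set of n vectors forming a linear basis of ℝ^n. Then B = B_1 ∪ ... ∪ B_{s−n}, where for each i the set B_i = B ∩ D_i consists of exactly m_i vectors and linearly spans L_i. -/
noncomputable section

open Matrix
open scoped InnerProductSpace

/-- a linear basis `B ⊆ D` of `ℝ^n`, where `D ∈ Ω` has partition into minimal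
positive bases `P i` of subspaces `L i` with `dim L i = m i`, decomposes as the union of the
sets `B ∩ P i`, each consisting of exactly `m i` vectors and linearly spanning `L i`. -/
theorem basis_partition_of_omega {n s : ℕ} (D : Finset (Euc n))
    (hD : IsUnitPosBasis D) (hcard : D.card = s)
    (L : Fin (s - n) → Submodule ℝ (Euc n)) (P : Fin (s - n) → Finset (Euc n))
    (m : Fin (s - n) → ℕ) (hm : ∀ i, Module.finrank ℝ (L i) = m i)
    (hpart : IsOmegaPartition D L P)
    (B : Finset (Euc n)) (hBD : B ⊆ D) (hBcard : B.card = n)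
    (hBspan : Submodule.span ℝ (↑B : Set (Euc n)) = ⊤) :
    (↑B : Set (Euc n)) = ⋃ i, ((↑B : Set (Euc n)) ∩ ↑(P i)) ∧
    ∀ i, ((↑B : Set (Euc n)) ∩ ↑(P i)).ncard = m i ∧
      Submodule.span ℝ ((↑B : Set (Euc n)) ∩ ↑(P i)) = L i := by
  classical
  obtain ⟨hrank, hmin, hdisj, hcover, hint⟩ := hpart
  have hUnion : (↑B : Set (Euc n)) = ⋃ i, ((↑B : Set (Euc n)) ∩ ↑(P i)) := by
    ext x
    simp only [Set.mem_iUnion, Set.mem_inter_iff]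
    constructor
    · intro hx
      have hxD : x ∈ (↑D : Set (Euc n)) := hBD hx
      rw [hcover] at hxD
      obtain ⟨_, ⟨i, rfl⟩, hi⟩ := hxD
      exact ⟨i, hx, hi⟩
    · rintro ⟨i, hx, -⟩; exact hx
  have hBindep : LinearIndependent ℝ ((↑) : (↑B : Set (Euc n)) → Euc n) := by
    apply linearIndependent_of_top_le_span_of_card_eq_finrank
    · rw [Subtype.range_coe, hBspan]
    · simp [finrank_euclideanSpace_fin, hBcard]
  set Bi : Fin (s - n) → Finset (Euc n) := fun i => B ∩ P i with hBidef
  have hcoe : ∀ i, ((↑B : Set (Euc n)) ∩ ↑(P i)) = ↑(Bi i) :=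
    fun i => (Finset.coe_inter B (P i)).symm
  have hindep : ∀ i, LinearIndependent ℝ ((↑) : (↑(Bi i) : Set (Euc n)) → Euc n) := by
    intro i
    refine (linearIndependent_subtype_iff.mp hBindep).mono ?_
    rw [← hcoe i]
    exact Set.inter_subset_left
  have hfr : ∀ i, Module.finrank ℝ (Submodule.span ℝ (↑(Bi i) : Set (Euc n))) = (Bi i).card :=
    fun i => finrank_span_finset_eq_card (hindep i)
  have hle : ∀ i, Submodule.span ℝ (↑(Bi i) : Set (Euc n)) ≤ L i := by
    intro i
    refine Submodule.span_le.mpr ?_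
    intro x hx
    have hxP : x ∈ P i := (Finset.mem_inter.mp (by exact_mod_cast hx)).2
    exact (hmin i).2.1 hxP
  have hcardle : ∀ i, (Bi i).card ≤ m i := by
    intro i
    have h := Submodule.finrank_mono (hle i)
    rwa [hfr i, hm i] at h
  have hsum_m : ∑ i, m i = n := by
    have e := LinearEquiv.ofBijective (DirectSum.coeLinearMap L) hint
    have h := e.finrank_eq
    rw [Module.finrank_directSum, finrank_euclideanSpace_fin] at h
    simp_rw [hm] at h
    exact h
  have hBeq : B = Finset.univ.biUnion Bi := by
    apply Finset.coe_injective
    rw [Finset.coe_biUnion]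
    simpa [hcoe] using hUnion
  have hsum_card : ∑ i, (Bi i).card = n := by
    have h1 : (Finset.univ.biUnion Bi).card = ∑ i, (Bi i).card := by
      apply Finset.card_biUnion
      intro i _ j _ hij
      have hd : Disjoint (↑(Bi i) : Set (Euc n)) (↑(Bi j) : Set (Euc n)) := by
        refine (hdisj i j hij).mono ?_ ?_
        · rw [← hcoe i]; exact Set.inter_subset_right
        · rw [← hcoe j]; exact Set.inter_subset_right
      exact Finset.disjoint_coe.mp hd
    rw [← h1, ← hBeq, hBcard]
  have hcardeq : ∀ i, (Bi i).card = m i := by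
    have := (Finset.sum_eq_sum_iff_of_le (fun i _ => hcardle i)).mp
      (by rw [hsum_card, hsum_m])
    exact fun i => this i (Finset.mem_univ i)
  refine ⟨hUnion, fun i => ?_⟩
  constructor
  · rw [hcoe i, Set.ncard_coe_finset, hcardeq i]
  · rw [hcoe i]
    exact Submodule.eq_of_le_of_finrank_eq (hle i)
      (by rw [hfr i, hcardeq i, hm i])
end
end

section
/- Let D be a positive basis of ℝ^n of size s belonging to Ω, with partition D = D_1 ∪ ... ∪ D_{s−n} into pairwise disjoint minimal positive bases D_i of the subspaces L_i (dim L_i = m_i), where ℝ^n = L_1 ⊕ ... ⊕ L_{s−n}. Then the number of subsets of D consisting of n vectors that form a linear basis of ℝ^n equals the product (m_1 + 1)(m_2 + 1) ⋯ (m_{s−n} + 1). -/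
noncomputable section

open Matrix
open scoped InnerProductSpace

lemma pspan_subset_span {n : ℕ} (S : Set (Euc n)) :
    pspan S ⊆ (Submodule.span ℝ S : Set (Euc n)) := by
  rintro v ⟨t, c, hts, _, rfl⟩
  exact Submodule.sum_mem _ fun d hd => Submodule.smul_mem _ _ (Submodule.subset_span (hts hd))

lemma span_of_minPosBasis {n : ℕ} {L : Submodule ℝ (Euc n)} {S : Finset (Euc n)}
    (h : IsMinPosBasisOf L S) : Submodule.span ℝ (↑S : Set (Euc n)) = L := by
  apply le_antisymm
  · rw [Submodule.span_le]; exact h.2.1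
  · intro x hx
    exact pspan_subset_span _ (by rw [h.2.2.2.1]; exact hx)

lemma mem_span_erase {n : ℕ} {L : Submodule ℝ (Euc n)} {S : Finset (Euc n)}
    [DecidableEq (Euc n)]
    (h : IsMinPosBasisOf L S) {d : Euc n} (hd : d ∈ S) :
    d ∈ Submodule.span ℝ ((↑(S.erase d) : Set (Euc n))) := by
  have hdL : d ∈ L := h.2.1 hd
  have hneg : -d ∈ pspan (↑S : Set (Euc n)) := by rw [h.2.2.2.1]; exact L.neg_mem hdL
  obtain ⟨t, c, hts, hc, hsum⟩ := hneg
  set N := Submodule.span ℝ ((↑(S.erase d) : Set (Euc n))) with hN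
  have hw : ∑ e ∈ t.erase d, c e • e ∈ N := by
    apply Submodule.sum_mem
    intro e he
    apply Submodule.smul_mem
    apply Submodule.subset_span
    rw [Finset.coe_erase]
    exact ⟨hts (Finset.mem_of_mem_erase he), Finset.ne_of_mem_erase he⟩
  by_cases hdt : d ∈ t
  · have heq : -d = c d • d + ∑ e ∈ t.erase d, c e • e := by
      rw [hsum, ← Finset.add_sum_erase _ (fun e => c e • e) hdt]
    have h1 : (1 + c d) • d = -(∑ e ∈ t.erase d, c e • e) := by
      have h2 : -d - c d • d = ∑ e ∈ t.erase d, c e • e := by rw [heq]; abel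
      rw [← h2, add_smul, one_smul]; abel
    have hpos : (0:ℝ) < 1 + c d := by have := hc d hdt; linarith
    have h3 : d = (1 + c d)⁻¹ • ((1 + c d) • d) := by
      rw [smul_smul, inv_mul_cancel₀ hpos.ne', one_smul]
    rw [h3, h1]
    exact Submodule.smul_mem _ _ (Submodule.neg_mem _ hw)
  · have ht' : t.erase d = t := Finset.erase_eq_of_notMem hdt
    have h3 : d = -(∑ e ∈ t.erase d, c e • e) := by rw [ht', ← hsum, neg_neg]
    rw [h3]
    exact Submodule.neg_mem _ hw

lemma span_erase_eq {n : ℕ} {L : Submodule ℝ (Euc n)} {S : Finset (Euc n)}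
    [DecidableEq (Euc n)]
    (h : IsMinPosBasisOf L S) {d : Euc n} (hd : d ∈ S) :
    Submodule.span ℝ (↑(S.erase d) : Set (Euc n)) = L := by
  rw [← span_of_minPosBasis h]
  apply le_antisymm (Submodule.span_mono (by rw [Finset.coe_erase]; exact Set.diff_subset))
  rw [Submodule.span_le]
  intro x hx
  rcases eq_or_ne x d with rfl | hne
  · exact mem_span_erase h hd
  · exact Submodule.subset_span (by rw [Finset.coe_erase]; exact ⟨hx, hne⟩)

lemma span_subset_card_eq {n : ℕ} {L : Submodule ℝ (Euc n)} {S : Finset (Euc n)}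
    [DecidableEq (Euc n)]
    (h : IsMinPosBasisOf L S) {T : Finset (Euc n)}
    (hT : T ⊆ S) (hcard : T.card + 1 = S.card) :
    Submodule.span ℝ (↑T : Set (Euc n)) = L := by
  obtain ⟨d, hd⟩ : ∃ d, d ∈ S \ T := by
    apply Finset.card_pos.mp
    rw [Finset.card_sdiff_of_subset hT]
    omega
  rw [Finset.mem_sdiff] at hd
  have hTe : T = S.erase d := by
    apply Finset.eq_of_subset_of_card_le
    · intro x hx
      exact Finset.mem_erase.mpr ⟨fun hxd => hd.2 (hxd ▸ hx), hT hx⟩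
    · rw [Finset.card_erase_of_mem hd.1]; omega
  rw [hTe]
  exact span_erase_eq h hd.1

/-- the number of `n`-element subsets of a positive basis `D ∈ Ω` that form a
linear basis of `ℝ^n` equals `∏ i, (m i + 1)`. -/
theorem card_bases_of_omega {n s : ℕ} (D : Finset (Euc n))
    (hD : IsUnitPosBasis D) (hcard : D.card = s)
    (L : Fin (s - n) → Submodule ℝ (Euc n)) (P : Fin (s - n) → Finset (Euc n))
    (m : Fin (s - n) → ℕ) (hm : ∀ i, Module.finrank ℝ (L i) = m i)
    (hpart : IsOmegaPartition D L P) :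
    {B : Finset (Euc n) | B ⊆ D ∧ B.card = n ∧
        Submodule.span ℝ (↑B : Set (Euc n)) = ⊤}.ncard = ∏ i, (m i + 1) := by
  classical
  obtain ⟨hdim, hmin, hdisj, hDU, hint⟩ := hpart
  have hPcard : ∀ i, (P i).card = m i + 1 := by
    intro i
    have := (hmin i).2.2.2.2
    rwa [hm i] at this
  have hPL : ∀ i, (↑(P i) : Set (Euc n)) ⊆ (L i : Set (Euc n)) := fun i => (hmin i).2.1
  have hPD : ∀ i, P i ⊆ D := by
    intro i x hx
    have : x ∈ (↑D : Set (Euc n)) := by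
      rw [hDU]; exact Set.mem_iUnion.mpr ⟨i, hx⟩
    exact this
  have hdisjF : ∀ i j, i ≠ j → Disjoint (P i) (P j) :=
    fun i j hij => Finset.disjoint_coe.mp (hdisj i j hij)
  have huniq : ∀ {i j : Fin (s - n)} {x : Euc n}, x ∈ P i → x ∈ P j → i = j := by
    intro i j x hxi hxj
    by_contra hij
    exact Finset.disjoint_left.mp (hdisjF i j hij) hxi hxj
  -- n = ∑ m i
  have hnm : ∑ i, m i = n := by
    have b := hint.collectedBasis (fun i => Module.finBasis ℝ (L i))
    have hb := Module.finrank_eq_card_basis b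
    rw [finrank_euclideanSpace_fin, Fintype.card_sigma] at hb
    simp only [Fintype.card_fin, hm] at hb
    exact hb.symm
  -- D as a biUnion
  have hDb : D = Finset.univ.biUnion P := by
    apply Finset.coe_injective
    rw [Finset.coe_biUnion, hDU]
    simp
  -- key characterization
  have key : ∀ B : Finset (Euc n), B ⊆ D →
      ((B.card = n ∧ Submodule.span ℝ (↑B : Set (Euc n)) = ⊤) ↔
        ∀ i, (B ∩ P i).card = m i) := by
    intro B hBD
    have hBb : B = Finset.univ.biUnion (fun i => B ∩ P i) := by
      ext x
      simp only [Finset.mem_biUnion, Finset.mem_univ, Finset.mem_inter, true_and]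
      constructor
      · intro hx
        have : x ∈ Finset.univ.biUnion P := hDb ▸ hBD hx
        obtain ⟨i, _, hi⟩ := Finset.mem_biUnion.mp this
        exact ⟨i, hx, hi⟩
      · rintro ⟨i, hx, _⟩; exact hx
    have hdisj' : ∀ i ∈ Finset.univ, ∀ j ∈ Finset.univ, i ≠ j →
        Disjoint (B ∩ P i) (B ∩ P j) := fun i _ j _ hij =>
      (hdisjF i j hij).mono Finset.inter_subset_right Finset.inter_subset_right
    have hBsum : B.card = ∑ i, (B ∩ P i).card := by
      conv_lhs => rw [hBb]
      exact Finset.card_biUnion hdisj'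
    constructor
    · rintro ⟨hBn, hBspan⟩ i
      have hli : LinearIndependent ℝ ((↑) : (↑B : Set (Euc n)) → Euc n) := by
        apply linearIndependent_of_top_le_span_of_card_eq_finrank
        · rw [Subtype.range_coe, hBspan]
        · have hcc : Fintype.card ↥(↑B : Set (Euc n)) = B.card := by simp
          rw [finrank_euclideanSpace_fin, hcc, hBn]
      have hle : ∀ j, (B ∩ P j).card ≤ m j := by
        intro j
        have hsub : (↑(B ∩ P j) : Set (Euc n)) ⊆ (↑B : Set (Euc n)) := by
          intro x hx
          exact Finset.mem_inter.mp hx |>.1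
        have hlj : LinearIndependent ℝ ((↑) : (↑(B ∩ P j) : Set (Euc n)) → Euc n) :=
          LinearIndepOn.mono (v := id) hli hsub
        have h1 : Module.finrank ℝ (Submodule.span ℝ (↑(B ∩ P j) : Set (Euc n)))
            = (B ∩ P j).card := finrank_span_finset_eq_card hlj
        have h2 : Submodule.span ℝ (↑(B ∩ P j) : Set (Euc n)) ≤ L j := by
          rw [Submodule.span_le]
          exact Set.Subset.trans (by intro x hx; exact Finset.mem_inter.mp hx |>.2) (hPL j)
        have := Submodule.finrank_mono h2
        rw [h1, hm j] at this
        exact this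
      have hsumeq : ∑ j, (B ∩ P j).card = ∑ j, m j := by
        rw [← hBsum, hBn, hnm]
      exact (Finset.sum_eq_sum_iff_of_le (fun j _ => hle j)).mp hsumeq i (Finset.mem_univ i)
    · intro hcardi
      have hBn : B.card = n := by
        rw [hBsum]
        simp only [hcardi]
        exact hnm
      refine ⟨hBn, ?_⟩
      rw [eq_top_iff, ← hint.submodule_iSup_eq_top]
      apply iSup_le
      intro i
      rw [← span_subset_card_eq (hmin i) Finset.inter_subset_right
        (by rw [hcardi i, hPcard i])]
      exact Submodule.span_mono (by intro x hx; simp only [Finset.coe_inter] at hx; exact hx.1)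
  -- the counting
  set φ : (∀ i, {x // x ∈ P i}) → Finset (Euc n) :=
    fun f => D \ Finset.image (fun i => (f i : Euc n)) Finset.univ with hφ
  have hrange : {B : Finset (Euc n) | B ⊆ D ∧ B.card = n ∧
      Submodule.span ℝ (↑B : Set (Euc n)) = ⊤} = φ '' Set.univ := by
    ext B
    simp only [Set.mem_setOf_eq, Set.image_univ, Set.mem_range]
    constructor
    · rintro ⟨hBD, hBn, hBspan⟩
      have hki : ∀ i, (B ∩ P i).card = m i := (key B hBD).mp ⟨hBn, hBspan⟩
      have hone : ∀ i, ∃ a, P i \ B = {a} := by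
        intro i
        apply Finset.card_eq_one.mp
        have := Finset.card_inter_add_card_sdiff (P i) B
        rw [Finset.inter_comm, hki i, hPcard i] at this
        omega
      choose a ha using hone
      have haP : ∀ i, a i ∈ P i := fun i =>
        (Finset.mem_sdiff.mp (by rw [ha i]; exact Finset.mem_singleton_self (a i))).1
      have haB : ∀ i, a i ∉ B := fun i =>
        (Finset.mem_sdiff.mp (by rw [ha i]; exact Finset.mem_singleton_self (a i))).2
      refine ⟨fun i => ⟨a i, haP i⟩, ?_⟩
      rw [hφ]
      ext x
      simp only [Finset.mem_sdiff, Finset.mem_image, Finset.mem_univ, true_and, not_exists]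
      constructor
      · rintro ⟨hxD, hxa⟩
        obtain ⟨j, _, hxj⟩ := Finset.mem_biUnion.mp (hDb ▸ hxD)
        by_contra hxB
        have : x ∈ P j \ B := Finset.mem_sdiff.mpr ⟨hxj, hxB⟩
        rw [ha j] at this
        exact hxa j (Finset.mem_singleton.mp this).symm
      · intro hxB
        refine ⟨hBD hxB, fun i hia => ?_⟩
        exact haB i (hia ▸ hxB)
    · rintro ⟨f, rfl⟩
      have hsub : φ f ⊆ D := Finset.sdiff_subset
      have hint' : ∀ i, φ f ∩ P i = (P i).erase (f i : Euc n) := by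
        intro i
        ext x
        simp only [hφ, Finset.mem_inter, Finset.mem_sdiff, Finset.mem_image, Finset.mem_univ,
          true_and, not_exists, Finset.mem_erase]
        constructor
        · rintro ⟨⟨_, hxa⟩, hxP⟩
          exact ⟨fun hx => hxa i hx.symm, hxP⟩
        · rintro ⟨hxne, hxP⟩
          refine ⟨⟨hPD i hxP, fun j hj => ?_⟩, hxP⟩
          have hji : j = i := huniq (hj ▸ (f j).2) hxP
          exact hxne (by rw [← hj, hji])
      have hki : ∀ i, (φ f ∩ P i).card = m i := by
        intro i
        rw [hint' i, Finset.card_erase_of_mem (f i).2, hPcard i]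
        omega
      exact ⟨hsub, (key (φ f) hsub).mpr hki⟩
  have hinj : Function.Injective φ := by
    intro f g hfg
    have himsub : ∀ h : ∀ i, {x // x ∈ P i},
        Finset.image (fun i => (h i : Euc n)) Finset.univ ⊆ D := by
      intro h x hx
      obtain ⟨i, _, rfl⟩ := Finset.mem_image.mp hx
      exact hPD i (h i).2
    have him : Finset.image (fun i => (f i : Euc n)) Finset.univ
        = Finset.image (fun i => (g i : Euc n)) Finset.univ := by
      have h1 := sdiff_sdiff_eq_self (himsub f)
      have h2 := sdiff_sdiff_eq_self (himsub g)
      rw [← h1, ← h2]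
      exact congrArg (fun t => D \ t) hfg
    funext i
    have : (f i : Euc n) ∈ Finset.image (fun j => (g j : Euc n)) Finset.univ := by
      rw [← him]
      exact Finset.mem_image.mpr ⟨i, Finset.mem_univ i, rfl⟩
    obtain ⟨j, _, hj⟩ := Finset.mem_image.mp this
    have hji : j = i := huniq (g j).2 (hj ▸ (f i).2)
    exact Subtype.ext (by rw [← hj, hji])
  rw [hrange, Set.ncard_image_of_injective _ hinj, Set.ncard_univ, Nat.card_pi]
  congr 1
  funext i
  rw [Nat.card_eq_fintype_card, Fintype.card_coe, hPcard]
end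
end

section
/- Let D be a positive basis of ℝ^n of size s belonging to Ω, and let B ⊆ D be a set of n vectors forming a linear basis of ℝ^n, viewed as an invertible n×n matrix whose columns are these vectors. Let γ_B = 1/√(1ᵀ G(B)⁻¹ 1) and let u_B = γ_B B⁻ᵀ 1 be the unit vector satisfying u_Bᵀ B = γ_B 1ᵀ. Then u_Bᵀ d ≤ 0 for every vector d ∈ D \ B. -/
noncomputable section

open Matrix
open scoped InnerProductSpace

/-- The value `γ_B = 1/√(1ᵀ G(B)⁻¹ 1)`. -/
def gammaB {n : ℕ} (B : Matrix (Fin n) (Fin n) ℝ) : ℝ :=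
  1 / Real.sqrt (grandSum (gram B)⁻¹)

/-- The unit vector `u_B = γ_B B⁻ᵀ 1` (so that `u_Bᵀ B = γ_B 1ᵀ`). -/
def uB {n : ℕ} (B : Matrix (Fin n) (Fin n) ℝ) : Euc n :=
  toEuc (gammaB B • ((Bᵀ)⁻¹ *ᵥ fun _ => (1 : ℝ)))

lemma Euc.sum_apply' {n : ℕ} {ι : Type*} (t : Finset ι) (f : ι → Euc n) (i : Fin n) :
    (∑ j ∈ t, f j) i = ∑ j ∈ t, f j i := by
  classical
  induction t using Finset.cons_induction with
  | empty => simp [PiLp.zero_apply]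
  | cons a s ha ih => rw [Finset.sum_cons, Finset.sum_cons, PiLp.add_apply, ih]

lemma colApp {n m : ℕ} (B : Matrix (Fin n) (Fin m) ℝ) (j : Fin m) (i : Fin n) :
    _root_.col B j i = B i j := rfl

lemma gammaB_nonneg {n : ℕ} (B : Matrix (Fin n) (Fin n) ℝ) : 0 ≤ gammaB B := by
  unfold gammaB
  positivity

lemma inner_uB_col {n : ℕ} (B : Matrix (Fin n) (Fin n) ℝ) (hB : IsUnit B.det) (j : Fin n) :
    ⟪uB B, _root_.col B j⟫_ℝ = gammaB B := by
  have hBt : IsUnit (Bᵀ).det := by rwa [Matrix.det_transpose]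
  have key : Bᵀ *ᵥ ((Bᵀ)⁻¹ *ᵥ fun _ => (1 : ℝ)) = fun _ => (1 : ℝ) := by
    rw [Matrix.mulVec_mulVec, Matrix.mul_nonsing_inv _ hBt, Matrix.one_mulVec]
  have key' : ∑ i, ((Bᵀ)⁻¹ *ᵥ fun _ => (1 : ℝ)) i * B i j = 1 := by
    have := congrFun key j
    simpa [Matrix.mulVec, dotProduct, Matrix.transpose_apply, mul_comm] using this
  have : ⟪uB B, col B j⟫_ℝ
      = ∑ i, (gammaB B * ((Bᵀ)⁻¹ *ᵥ fun _ => (1 : ℝ)) i) * B i j := by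
    rw [PiLp.inner_apply]
    refine Finset.sum_congr rfl fun i _ => ?_
    rw [RCLike.inner_apply, colApp]
    simp [uB, toEuc, PiLp.smul_apply, smul_eq_mul]
    ring
  rw [this]
  simp_rw [mul_assoc, ← Finset.mul_sum]
  rw [key', mul_one]

lemma linearIndependent_col {n : ℕ} (B : Matrix (Fin n) (Fin n) ℝ) (hB : IsUnit B.det) :
    LinearIndependent ℝ (_root_.col B) := by
  rw [Fintype.linearIndependent_iff]
  intro g hg
  have hmv : B *ᵥ g = 0 := by
    funext i
    have := congrArg (fun v : Euc n => v i) hg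
    simp only [Euc.sum_apply', PiLp.smul_apply, smul_eq_mul] at this
    simp only [colApp, PiLp.zero_apply] at this
    simpa [Matrix.mulVec, dotProduct, mul_comm] using this
  have hinj : Function.Injective B.mulVec :=
    Matrix.mulVec_injective_iff_isUnit.mpr ((Matrix.isUnit_iff_isUnit_det B).mpr hB)
  intro j
  have := hinj (by rw [hmv, Matrix.mulVec_zero] : B *ᵥ g = B *ᵥ 0)
  simp [this]

/-- for `D ∈ Ω` and `B ⊆ D` a linear basis of `ℝ^n`,
`u_Bᵀ d ≤ 0` for every `d ∈ D` not a column of `B`. -/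
theorem uB_dotprod_nonpos {n s : ℕ} (D : Finset (Euc n))
    (hD : IsUnitPosBasis D) (hcard : D.card = s) (hΩ : MemOmega s D)
    (B : Matrix (Fin n) (Fin n) ℝ)
    (hBmem : ∀ j, _root_.col B j ∈ D)
    (hBinj : Function.Injective (_root_.col B))
    (hBbasis : IsUnit B.det) :
    ∀ d ∈ D, (∀ j, d ≠ _root_.col B j) → ⟪uB B, d⟫_ℝ ≤ 0 := by
  classical
  obtain ⟨L, P, hrank, hmin, hdisj, hunion, hinternal⟩ := hΩ
  intro d hd hdB
  -- the set of columns of B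
  set Bset : Finset (Euc n) := Finset.image (_root_.col B) Finset.univ with hBsetdef
  have hBsetD : Bset ⊆ D := by
    intro x hx
    obtain ⟨j, _, rfl⟩ := Finset.mem_image.mp hx
    exact hBmem j
  have hcardB : Bset.card = n := by
    rw [hBsetdef, Finset.card_image_of_injective _ hBinj, Finset.card_univ, Fintype.card_fin]
  have hinner : ∀ e ∈ Bset, ⟪uB B, e⟫_ℝ = gammaB B := by
    intro e he
    obtain ⟨j, _, rfl⟩ := Finset.mem_image.mp he
    exact inner_uB_col B hBbasis j
  -- linear independence of the columns as a set
  have hliB : LinearIndependent ℝ ((↑) : (↑Bset : Set (Euc n)) → Euc n) := by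
    have h1 := (linearIndepOn_id_range_iff (linearIndependent_col B hBbasis).injective).mpr
      (linearIndependent_col B hBbasis)
    have h2 : Set.range (_root_.col B) = (↑Bset : Set (Euc n)) := by
      rw [hBsetdef, Finset.coe_image, Finset.coe_univ, Set.image_univ]
    rw [h2] at h1
    exact h1
  -- dimension count
  have hsum_m : ∑ i, Module.finrank ℝ (L i) = n := by
    have e : (DirectSum (Fin (s - n)) fun i => L i) ≃ₗ[ℝ] Euc n :=
      LinearEquiv.ofBijective (DirectSum.coeLinearMap L) hinternal
    have h1 := e.finrank_eq
    rw [Module.finrank_directSum] at h1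
    rw [h1]
    exact finrank_euclideanSpace_fin
  have hile : ∀ i, (Bset ∩ P i).card ≤ Module.finrank ℝ (L i) := by
    intro i
    have hsubset : (↑(Bset ∩ P i) : Set (Euc n)) ⊆ (↑Bset : Set (Euc n)) := by
      rw [Finset.coe_inter]; exact Set.inter_subset_left
    have hli2 : LinearIndependent ℝ ((↑) : (↑(Bset ∩ P i) : Set (Euc n)) → Euc n) :=
      LinearIndepOn.mono (v := id) (s := (↑Bset : Set (Euc n))) hliB hsubset
    have hspanle : Submodule.span ℝ (↑(Bset ∩ P i) : Set (Euc n)) ≤ L i := by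
      rw [Submodule.span_le]
      intro x hx
      rw [Finset.coe_inter] at hx
      exact (hmin i).2.1 hx.2
    calc (Bset ∩ P i).card
        = Module.finrank ℝ (Submodule.span ℝ (↑(Bset ∩ P i) : Set (Euc n))) :=
          (finrank_span_finset_eq_card hli2).symm
      _ ≤ Module.finrank ℝ (L i) := Submodule.finrank_mono hspanle
  have hBun : Bset = Finset.univ.biUnion (fun i => Bset ∩ P i) := by
    apply Finset.Subset.antisymm
    · intro x hx
      have hxD : x ∈ D := hBsetD hx
      have hxU : (x : Euc n) ∈ ⋃ i, (↑(P i) : Set (Euc n)) := by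
        rw [← hunion]; exact hxD
      obtain ⟨i, hi⟩ := Set.mem_iUnion.mp hxU
      exact Finset.mem_biUnion.mpr ⟨i, Finset.mem_univ _, Finset.mem_inter.mpr ⟨hx, hi⟩⟩
    · intro x hx
      obtain ⟨i, _, hi⟩ := Finset.mem_biUnion.mp hx
      exact (Finset.mem_inter.mp hi).1
  have hcards : ∑ i, (Bset ∩ P i).card = Bset.card := by
    conv_rhs => rw [hBun]
    rw [Finset.card_biUnion]
    intro i _ j _ hij
    have hds := hdisj i j hij
    simp only [Function.onFun]
    rw [Finset.disjoint_left]
    intro a ha haj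
    exact Set.disjoint_left.mp hds (Finset.mem_inter.mp ha).2 (Finset.mem_inter.mp haj).2
  have hcard_eq : ∀ i, (Bset ∩ P i).card = Module.finrank ℝ (L i) := by
    have h := (Finset.sum_eq_sum_iff_of_le (fun i _ => hile i)).mp ((hcards.trans hcardB).trans hsum_m.symm)
    exact fun i => h i (Finset.mem_univ i)
  -- locate d in some P i
  have hdU : (d : Euc n) ∈ ⋃ i, (↑(P i) : Set (Euc n)) := by rw [← hunion]; exact hd
  obtain ⟨i, hdPi'⟩ := Set.mem_iUnion.mp hdU
  have hdPi : d ∈ P i := hdPi'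
  have hdBset : d ∉ Bset := by
    intro hdB'
    obtain ⟨j, _, hj⟩ := Finset.mem_image.mp hdB'
    exact hdB j hj.symm
  -- Bset ∩ P i = (P i).erase d
  have hsub2 : Bset ∩ P i ⊆ (P i).erase d := by
    intro x hx
    rw [Finset.mem_erase]
    refine ⟨fun h => hdBset (h ▸ (Finset.mem_inter.mp hx).1), (Finset.mem_inter.mp hx).2⟩
  have hcard_erase : ((P i).erase d).card = Module.finrank ℝ (L i) := by
    rw [Finset.card_erase_of_mem hdPi, (hmin i).2.2.2.2]
    simp
  have hBPi : Bset ∩ P i = (P i).erase d :=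
    Finset.eq_of_subset_of_card_le hsub2 (by rw [hcard_erase, hcard_eq i])
  have heraseB : (P i).erase d ⊆ Bset := by
    rw [← hBPi]; exact Finset.inter_subset_left
  -- -d is a nonneg combination of P i
  have hdL : d ∈ L i := (hmin i).2.1 hdPi'
  have hnd : (-d : Euc n) ∈ pspan (↑(P i) : Set (Euc n)) := by
    rw [(hmin i).2.2.2.1]
    exact (L i).neg_mem hdL
  obtain ⟨t, c, htsub, hcnn, heq⟩ := hnd
  have htsub' : t ⊆ P i := Finset.coe_subset.mp htsub
  set c' : Euc n → ℝ := fun e => if e ∈ t then c e else 0 with hc'def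
  have hc'nn : ∀ e, 0 ≤ c' e := by
    intro e
    by_cases h : e ∈ t
    · simpa [hc'def, h] using hcnn e h
    · simp [hc'def, h]
  have heq' : (-d : Euc n) = ∑ e ∈ P i, c' e • e := by
    rw [heq]
    rw [← Finset.sum_subset htsub' (fun x _ hx => by simp [hc'def, hx])]
    exact Finset.sum_congr rfl fun x hx => by simp [hc'def, hx]
  have hsplit : (-d : Euc n) = c' d • d + ∑ e ∈ (P i).erase d, c' e • e := by
    rw [heq', ← Finset.add_sum_erase _ _ hdPi]
  -- take inner products
  have hS : 0 ≤ ⟪uB B, ∑ e ∈ (P i).erase d, c' e • e⟫_ℝ := by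
    rw [inner_sum]
    apply Finset.sum_nonneg
    intro e he
    rw [real_inner_smul_right, hinner e (heraseB he)]
    exact mul_nonneg (hc'nn e) (gammaB_nonneg B)
  have hmain : -⟪uB B, d⟫_ℝ = c' d * ⟪uB B, d⟫_ℝ
      + ⟪uB B, ∑ e ∈ (P i).erase d, c' e • e⟫_ℝ := by
    rw [← real_inner_smul_right, ← inner_add_right, ← hsplit, inner_neg_right]
  nlinarith [hc'nn d, hS, hmain]
end
end
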